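/- arXiv:2411.07697 — 6 statements merged into one kernel-verified Lean document; each statement's English description precedes it below -/
import Mathlib

section
/- Let F = [[0,0,1],[1,1,0]] (the 2×3 matrix with top row 0,0,1 and bottom row 1,1,0). Let A be a simple m-rowed (0,1)-matrix that avoids F^T as a configuration but contains I_2 as a configuration. Then, after suitable row and column permutations, A has the block form [[A_1, 0, 0],[1, B, 0],[1, 1, A_2]] where A_1, A_2 are simple matrices avoiding F^T, and B equals I_k or the (0,1)-complement of I_k for some k ≥ 2. -/
/-- A (0,1)-matrix (entries as `Bool`) is simple if it has no repeated columns. -/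
def Simple {α β : Type*} (A : α → β → Bool) : Prop :=
  Function.Injective fun j i => A i j

/-- `F` is a configuration in `A`: some submatrix of `A` is a row and column
permutation of `F`. -/
def IsConfig {α β γ δ : Type*} (F : α → β → Bool) (A : γ → δ → Bool) : Prop :=
  ∃ (r : α ↪ γ) (c : β ↪ δ), ∀ i j, F i j = A (r i) (c j)

/-- The 2×2 identity matrix. -/
def I2 : Fin 2 → Fin 2 → Bool := fun i j => decide (i = j)

/-- `Fᵀ`, the transpose of `F = [[0,0,1],[1,1,0]]`; a 3×2 matrix. -/
def FT : Fin 3 → Fin 2 → Bool :=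
  ![![false, true], ![false, true], ![true, false]]

/-- The block matrix `[[A₁,0,0],[1,B,0],[1,1,A₂]]`. -/
def blockEntry {m₁ k m₂ n₁ n₂ : ℕ} (A₁ : Fin m₁ → Fin n₁ → Bool)
    (B : Fin k → Fin k → Bool) (A₂ : Fin m₂ → Fin n₂ → Bool) :
    (Fin m₁ ⊕ Fin k ⊕ Fin m₂) → (Fin n₁ ⊕ Fin k ⊕ Fin n₂) → Bool
  | Sum.inl i, Sum.inl j => A₁ i j
  | Sum.inl _, Sum.inr (Sum.inl _) => false
  | Sum.inl _, Sum.inr (Sum.inr _) => false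
  | Sum.inr (Sum.inl _), Sum.inl _ => true
  | Sum.inr (Sum.inl i), Sum.inr (Sum.inl j) => B i j
  | Sum.inr (Sum.inl _), Sum.inr (Sum.inr _) => false
  | Sum.inr (Sum.inr _), Sum.inl _ => true
  | Sum.inr (Sum.inr _), Sum.inr (Sum.inl _) => true
  | Sum.inr (Sum.inr i), Sum.inr (Sum.inr j) => A₂ i j

/-!
Write `S j` for the set of rows in which column `j` has a one. Avoiding `Fᵀ` says that for any
two columns, either one support contains the other or each has exactly one row the other lacks;
in particular a column with a smaller support than another one has its support inside it.
The `I₂` gives two incomparable columns, so of equal support size `s`, and the columns `M` of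
support size `s` form a family in which any two supports differ by swapping one row. Such a
family is a sunflower `{T ∪ {z_c}}` or a co-sunflower `{U \ {w_c}}`; the rows `z_c` (resp. `w_c`)
against the columns `M` give `B = I_k` (resp. `I_kᶜ`). Every other column has support size
different from `s`, so it contains all supports of `M` or is contained in all of them. Ordering
columns as above / in / below `M` and rows as lying in none / some / all of the supports of `M`
produces the triangular block pattern.
-/

open Finset Function

section Submatrix

variable {α β γ δ γ' δ' : Type*}

theorem IsConfig.of_submatrix {F : α → β → Bool} {A : γ → δ → Bool} (r : γ' ↪ γ) (c : δ' ↪ δ)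
    (h : IsConfig F fun i j => A (r i) (c j)) : IsConfig F A :=
  let ⟨r', c', h⟩ := h
  ⟨r'.trans r, c'.trans c, h⟩

theorem Simple.submatrix {A : γ → δ → Bool} (hA : Simple A) {r : γ' → γ} (hr : Surjective r)
    {c : δ' → δ} (hc : Injective c) : Simple fun i j => A (r i) (c j) := fun b b' h =>
  hc <| hA <| funext fun i => by
    obtain ⟨a, rfl⟩ := hr i
    exact congrFun h a

end Submatrix

section Support

variable {α β : Type*} [Fintype α] {A : α → β → Bool} {a b : β}

def colSupport (A : α → β → Bool) (j : β) : Finset α := {i | A i j}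

local notation "S" => colSupport A

theorem mem_colSupport {i : α} {j : β} : i ∈ colSupport A j ↔ A i j = true := by
  simp [colSupport]

theorem colSupport_injective (hS : Simple A) : Injective (colSupport A) := fun a b h =>
  hS <| funext fun i => Bool.eq_iff_iff.2 <| by
    simpa only [mem_colSupport] using Finset.ext_iff.1 h i

theorem exists_not_subset_of_isConfig_I2 (hI : IsConfig I2 A) :
    ∃ a b, ¬ S a ⊆ S b ∧ ¬ S b ⊆ S a := by
  obtain ⟨r, c, h⟩ := hI
  refine ⟨c 0, c 1, not_subset.2 ⟨r 0, ?_, ?_⟩, not_subset.2 ⟨r 1, ?_, ?_⟩⟩ <;>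
    simp [mem_colSupport, ← h, I2]

variable [DecidableEq α]

theorem isConfig_FT_of_mem_sdiff {r₁ r₂ r₃ : α} (h₁₂ : r₁ ≠ r₂) (h₁ : r₁ ∈ S b \ S a)
    (h₂ : r₂ ∈ S b \ S a) (h₃ : r₃ ∈ S a \ S b) : IsConfig FT A := by
  simp only [mem_sdiff, mem_colSupport, Bool.not_eq_true] at h₁ h₂ h₃
  have h₁₃ : r₁ ≠ r₃ := by rintro rfl; simp_all
  have h₂₃ : r₂ ≠ r₃ := by rintro rfl; simp_all
  have hab : a ≠ b := by rintro rfl; simp_all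
  refine ⟨⟨![r₁, r₂, r₃], ?_⟩, ⟨![a, b], ?_⟩, ?_⟩
  · intro x y; fin_cases x <;> fin_cases y <;> simp [*, h₁₂.symm, h₁₃.symm, h₂₃.symm]
  · intro x y; fin_cases x <;> fin_cases y <;> simp [hab, hab.symm]
  · intro x y
    change FT x y = A (![r₁, r₂, r₃] x) (![a, b] y)
    fin_cases x <;> fin_cases y <;> simp [FT, *]

theorem card_colSupport_sdiff_le_one (hav : ¬ IsConfig FT A) (h : (S a \ S b).Nonempty) :
    #(S b \ S a) ≤ 1 := by
  by_contra! h'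
  obtain ⟨r₁, h₁, r₂, h₂, h₁₂⟩ := one_lt_card.1 h'
  obtain ⟨r₃, h₃⟩ := h
  exact hav (isConfig_FT_of_mem_sdiff h₁₂ h₁ h₂ h₃)

theorem colSupport_subset_of_card_lt (hav : ¬ IsConfig FT A) (h : #(S a) < #(S b)) :
    S a ⊆ S b := by
  by_contra hab
  have hne := sdiff_nonempty.2 hab
  have : #(S b \ S a) ≤ #(S a \ S b) :=
    (card_colSupport_sdiff_le_one hav hne).trans (card_pos.2 hne)
  exact (card_sdiff_le_card_sdiff_iff.1 this).not_gt h

theorem card_colSupport_eq_of_not_subset (hav : ¬ IsConfig FT A) (hab : ¬ S a ⊆ S b)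
    (hba : ¬ S b ⊆ S a) : #(S a) = #(S b) :=
  le_antisymm (not_lt.1 fun h => hba (colSupport_subset_of_card_lt hav h))
    (not_lt.1 fun h => hab (colSupport_subset_of_card_lt hav h))

theorem card_colSupport_sdiff_eq_one (hS : Simple A) (hav : ¬ IsConfig FT A) (hab : a ≠ b)
    (h : #(S a) = #(S b)) : #(S a \ S b) = 1 := by
  have not_subset {a b} (hab : a ≠ b) (h : #(S a) = #(S b)) : ¬ S a ⊆ S b := fun hsub =>
    hab (colSupport_injective hS (eq_of_subset_of_card_le hsub h.ge))
  exact le_antisymm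
    (card_colSupport_sdiff_le_one hav (sdiff_nonempty.2 (not_subset hab.symm h.symm)))
    (card_pos.2 (sdiff_nonempty.2 (not_subset hab h)))

end Support

section Sunflower

variable {ι α : Type*} [DecidableEq α] {S : ι → Finset α} {M : Finset ι}

def IsSwapFamily (S : ι → Finset α) (M : Finset ι) : Prop :=
  ∀ a ∈ M, ∀ b ∈ M, a ≠ b → #(S a \ S b) = 1

theorem IsSwapFamily.injOn (hswap : IsSwapFamily S M) : Set.InjOn S M := fun a ha b hb h => by
  by_contra hne
  simpa [h] using hswap a ha b hb hne

theorem IsSwapFamily.card_eq (hswap : IsSwapFamily S M) {a b : ι} (ha : a ∈ M) (hb : b ∈ M) :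
    #(S a) = #(S b) := by
  obtain rfl | hab := eq_or_ne a b
  · rfl
  · exact card_sdiff_eq_card_sdiff_iff.1 (by rw [hswap a ha b hb hab, hswap b hb a ha hab.symm])

theorem IsSwapFamily.subset_union_of_not_inter_subset (hswap : IsSwapFamily S M)
    {j₁ j₂ c : ι} (h₁ : j₁ ∈ M) (h₂ : j₂ ∈ M) (h₁₂ : j₁ ≠ j₂) (hc : c ∈ M)
    (hT : ¬ S j₁ ∩ S j₂ ⊆ S c) : S c ⊆ S j₁ ∪ S j₂ := by
  obtain ⟨t, htT, htc⟩ := not_subset.1 hT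
  -- `t` is the one element that each of `S j₁`, `S j₂` has and `S c` lacks
  have hsub : (S j₁ ∪ S j₂).erase t ⊆ S c := by
    intro i hi
    by_contra hic
    obtain ⟨hit, hiU⟩ := mem_erase.1 hi
    have only_t j (hj : j ∈ M) (htj : t ∈ S j) (hij : i ∈ S j) : False :=
      hit <| card_le_one.1 (hswap j hj c hc (by rintro rfl; exact htc htj)).le i
        (mem_sdiff.2 ⟨hij, hic⟩) t (mem_sdiff.2 ⟨htj, htc⟩)
    rcases mem_union.1 hiU with hij | hij
    · exact only_t j₁ h₁ (inter_subset_left htT) hij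
    · exact only_t j₂ h₂ (inter_subset_right htT) hij
  have hcard : #(S j₂ \ S j₁) + #(S c) = #(S j₂ ∪ S j₁) := by
    rw [hswap.card_eq hc h₁, card_sdiff_add_card]
  rw [hswap j₂ h₂ j₁ h₁ h₁₂.symm, union_comm] at hcard
  have := eq_of_subset_of_card_le hsub (by rw [card_erase_of_mem (inter_subset_union htT)]; omega)
  exact this ▸ erase_subset t _

theorem IsSwapFamily.exists_sunflower_or_cosunflower (hswap : IsSwapFamily S M) (hM : 1 < #M) :
    (∃ (T : Finset α) (ζ : ι → α), ∀ c ∈ M, ζ c ∉ T ∧ S c = insert (ζ c) T) ∨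
      ∃ (U : Finset α) (ζ : ι → α), ∀ c ∈ M, ζ c ∈ U ∧ S c = U.erase (ζ c) := by
  obtain ⟨j₁, h₁, j₂, h₂, h₁₂⟩ := one_lt_card.1 hM
  obtain ⟨x, -⟩ := card_eq_one.1 (hswap j₁ h₁ j₂ h₂ h₁₂)
  have : Nonempty α := ⟨x⟩
  have hcard c (hc : c ∈ M) : #(S c) = #(S j₁) := hswap.card_eq hc h₁
  set T := S j₁ ∩ S j₂
  set U := S j₁ ∪ S j₂
  have hT : #T + 1 = #(S j₁) := by
    rw [← card_sdiff_add_card_inter (S j₁) (S j₂), hswap j₁ h₁ j₂ h₂ h₁₂, add_comm]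
  have hU : #(S j₁) + 1 = #U := by
    rw [show U = S j₂ ∪ S j₁ from union_comm _ _, ← card_sdiff_add_card,
      hswap j₂ h₂ j₁ h₁ h₁₂.symm, add_comm]
  by_cases hall : ∀ c ∈ M, T ⊆ S c
  · left
    choose! ζ hζ using fun c hc => exists_eq_insert_iff.2 ⟨hall c hc, by rw [hT, hcard c hc]⟩
    exact ⟨T, ζ, fun c hc => ⟨(hζ c hc).1, (hζ c hc).2.symm⟩⟩
  · right
    push Not at hall
    obtain ⟨c₀, hc₀, hTc₀⟩ := hall
    obtain ⟨t₀, ht₀T, ht₀⟩ := not_subset.1 hTc₀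
    have hsubU c (hc : c ∈ M) : S c ⊆ U := by
      by_cases hTc : T ⊆ S c
      · -- `S c \ S c₀` is `{t₀}`, leaving no room for an element outside `U`
        intro i hic
        by_contra hiU
        have hcc₀ : c ≠ c₀ := by rintro rfl; exact hTc₀ hTc
        have hsub₀ := hswap.subset_union_of_not_inter_subset h₁ h₂ h₁₂ hc₀ hTc₀
        have := card_le_one.1 (hswap c hc c₀ hc₀ hcc₀).le i
          (mem_sdiff.2 ⟨hic, fun h => hiU (hsub₀ h)⟩) t₀ (mem_sdiff.2 ⟨hTc ht₀T, ht₀⟩)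
        exact hiU (this ▸ inter_subset_union ht₀T)
      · exact hswap.subset_union_of_not_inter_subset h₁ h₂ h₁₂ hc hTc
    choose! ζ hζ using fun c hc => exists_eq_insert_iff.2 ⟨hsubU c hc, by rw [hcard c hc, hU]⟩
    refine ⟨U, ζ, fun c hc => ?_⟩
    obtain ⟨hζc, hU⟩ := hζ c hc
    exact ⟨hU ▸ mem_insert_self _ _, by rw [← hU, erase_insert hζc]⟩

end Sunflower

section Diagonal

variable {ι α : Type*} {S : ι → Finset α} {M : Finset ι} {ζ : ι → α}

def IsDiagonalOrCodiagonal (S : ι → Finset α) (M : Finset ι) (ζ : ι → α) : Prop :=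
  (∀ c ∈ M, ∀ c' ∈ M, ζ c' ∈ S c ↔ c' = c) ∨ ∀ c ∈ M, ∀ c' ∈ M, ζ c' ∈ S c ↔ c' ≠ c

theorem IsSwapFamily.exists_isDiagonalOrCodiagonal [DecidableEq α] (hswap : IsSwapFamily S M)
    (hM : 1 < #M) : ∃ ζ, IsDiagonalOrCodiagonal S M ζ := by
  rcases hswap.exists_sunflower_or_cosunflower hM with ⟨T, ζ, hζ⟩ | ⟨U, ζ, hζ⟩
  · refine ⟨ζ, .inl fun c hc c' hc' => ?_⟩
    rw [(hζ c hc).2, mem_insert, or_iff_left (hζ c' hc').1]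
    exact ⟨fun h => hswap.injOn hc' hc (by rw [(hζ c hc).2, (hζ c' hc').2, h]), fun h => h ▸ rfl⟩
  · refine ⟨ζ, .inr fun c hc c' hc' => ?_⟩
    rw [(hζ c hc).2, mem_erase, and_iff_left (hζ c' hc').1]
    exact not_congr
      ⟨fun h => hswap.injOn hc' hc (by rw [(hζ c hc).2, (hζ c' hc').2, h]), fun h => h ▸ rfl⟩

theorem IsDiagonalOrCodiagonal.injOn (hζ : IsDiagonalOrCodiagonal S M ζ) : Set.InjOn ζ M := by
  intro a ha b hb hab
  rcases hζ with hζ | hζ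
  · exact (hζ b hb a ha).1 (hab ▸ (hζ b hb b hb).2 rfl)
  · by_contra hne
    exact (hζ a ha a ha).1 (hab ▸ (hζ a ha b hb).2 (Ne.symm hne)) rfl

theorem IsDiagonalOrCodiagonal.exists_mem_and_not_forall_mem_iff [DecidableEq α]
    (hζ : IsDiagonalOrCodiagonal S M ζ) (hswap : IsSwapFamily S M) (hM : 1 < #M) (x : α) :
    ((∃ a ∈ M, x ∈ S a) ∧ ¬ ∀ b ∈ M, x ∈ S b) ↔ ∃ c ∈ M, ζ c = x := by
  constructor
  · rintro ⟨⟨a, ha, hxa⟩, hxb⟩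
    push Not at hxb
    obtain ⟨b, hb, hxb⟩ := hxb
    have hab : a ≠ b := by rintro rfl; exact hxb hxa
    have hsd {y} (hya : y ∈ S a) (hyb : y ∉ S b) : y = x :=
      card_le_one.1 (hswap a ha b hb hab).le _ (mem_sdiff.2 ⟨hya, hyb⟩) _ (mem_sdiff.2 ⟨hxa, hxb⟩)
    rcases hζ with hζ | hζ
    · exact ⟨a, ha, hsd ((hζ a ha a ha).2 rfl) (mt (hζ b hb a ha).1 hab)⟩
    · exact ⟨b, hb, hsd ((hζ a ha b hb).2 hab.symm) (not_not_intro rfl ∘ (hζ b hb b hb).1)⟩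
  · rintro ⟨c, hc, rfl⟩
    obtain ⟨c', hc', hc'c⟩ := exists_mem_ne hM c
    rcases hζ with hζ | hζ
    · exact ⟨⟨c, hc, (hζ c hc c hc).2 rfl⟩, fun h => hc'c ((hζ c' hc' c hc).1 (h c' hc')).symm⟩
    · exact ⟨⟨c', hc', (hζ c' hc' c hc).2 hc'c.symm⟩, fun h => (hζ c hc c hc).1 (h c hc) rfl⟩

end Diagonal

section Layer

variable {α β : Type*} [DecidableEq α] {S : β → Finset α} {M : Finset β} {i : α} {j : β}

def rowPart (S : β → Finset α) (M : Finset β) (i : α) : Fin 3 :=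
  if ∀ c ∈ M, i ∈ S c then 2 else if ∃ c ∈ M, i ∈ S c then 1 else 0

theorem rowPart_eq_one_iff :
    rowPart S M i = 1 ↔ (∃ a ∈ M, i ∈ S a) ∧ ¬ ∀ b ∈ M, i ∈ S b := by
  unfold rowPart
  split_ifs <;> simp_all

variable [DecidableEq β]

def colPart (S : β → Finset α) (M : Finset β) (j : β) : Fin 3 :=
  if j ∈ M then 1 else if ∀ c ∈ M, S c ⊆ S j then 0 else 2

theorem colPart_eq_one_iff : colPart S M j = 1 ↔ j ∈ M := by
  unfold colPart
  split_ifs <;> simp_all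

theorem mem_of_colPart_lt_rowPart (hM : M.Nonempty) (h : colPart S M j < rowPart S M i) :
    i ∈ S j := by
  unfold colPart rowPart at h
  obtain ⟨c, hc⟩ := hM
  split_ifs at h <;> grind

theorem not_mem_of_rowPart_lt_colPart
    (hcols : ∀ j ∉ M, (∀ c ∈ M, S c ⊆ S j) ∨ ∀ c ∈ M, S j ⊆ S c)
    (h : rowPart S M i < colPart S M j) : i ∉ S j := by
  unfold colPart rowPart at h
  split_ifs at h <;> grind

end Layer

section Block

variable {m₁ k m₂ n₁ n₂ : ℕ}

def blockIndex {X Y Z : Type*} : X ⊕ Y ⊕ Z → Fin 3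
  | .inl _ => 0
  | .inr (.inl _) => 1
  | .inr (.inr _) => 2

theorem eq_blockEntry_of_triangular
    (M : (Fin m₁ ⊕ Fin k ⊕ Fin m₂) → (Fin n₁ ⊕ Fin k ⊕ Fin n₂) → Bool)
    (hlow : ∀ p q, blockIndex q < blockIndex p → M p q = true)
    (hup : ∀ p q, blockIndex p < blockIndex q → M p q = false) (p q) :
    M p q = blockEntry (fun i j => M (.inl i) (.inl j))
      (fun i j => M (.inr (.inl i)) (.inr (.inl j))) (fun i j => M (.inr (.inr i)) (.inr (.inr j)))
      p q := by
  rcases p with i | i | i <;> rcases q with j | j | j <;>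
    first | rfl | exact hlow _ _ (by simp [blockIndex]) | exact hup _ _ (by simp [blockIndex])

variable {A₁ : Fin m₁ → Fin n₁ → Bool} {B : Fin k → Fin k → Bool} {A₂ : Fin m₂ → Fin n₂ → Bool}

theorem Simple.of_blockEntry_left (h : Simple (blockEntry A₁ B A₂)) : Simple A₁ := fun b b' hbb' =>
  Sum.inl_injective <| @h (.inl b) (.inl b') <| funext fun
    | .inl i => congrFun hbb' i
    | .inr (.inl _) => rfl
    | .inr (.inr _) => rfl

theorem Simple.of_blockEntry_right (h : Simple (blockEntry A₁ B A₂)) : Simple A₂ := fun b b' hbb' =>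
  Sum.inr_injective <| Sum.inr_injective <| @h (.inr (.inr b)) (.inr (.inr b')) <| funext fun
    | .inl _ => rfl
    | .inr (.inl _) => rfl
    | .inr (.inr i) => congrFun hbb' i

end Block

theorem exists_equiv_blockIndex {α : Type*} [Fintype α] (part : α → Fin 3) {k : ℕ}
    (mid : Fin k → α) (hmid : Injective mid) (hpart : ∀ a, part a = 1 ↔ a ∈ Set.range mid) :
    ∃ (m₁ m₂ : ℕ) (e : α ≃ Fin m₁ ⊕ Fin k ⊕ Fin m₂),
      (∀ a, blockIndex (e a) = part a) ∧ ∀ t, e.symm (.inr (.inl t)) = mid t := by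
  let top := (Fintype.equivFin {a // part a = 0}).symm
  let bot := (Fintype.equivFin {a // part a = 2}).symm
  let g := Sum.elim (fun x => (top x).1) (Sum.elim mid fun y => (bot y).1)
  have hg : ∀ p, part (g p) = blockIndex p
    | .inl x => (top x).2
    | .inr (.inl t) => (hpart _).2 ⟨t, rfl⟩
    | .inr (.inr y) => (bot y).2
  have hne {p q} (h : blockIndex p ≠ blockIndex q) : g p ≠ g q := fun hpq =>
    h (by rw [← hg, ← hg, hpq])
  have hinj : Injective g :=
    (Subtype.val_injective.comp top.injective).sumElim
      (hmid.sumElim (Subtype.val_injective.comp bot.injective) fun t y =>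
        hne (p := .inr (.inl t)) (q := .inr (.inr y)) (by simp [blockIndex]))
      fun x p => hne (p := .inl x) (q := .inr p) (by rcases p with _ | _ <;> simp [blockIndex])
  have hsurj : Surjective g := fun a => by
    match h : part a with
    | 0 => exact ⟨.inl (top.symm ⟨a, h⟩), by simp [g]⟩
    | 1 => obtain ⟨t, rfl⟩ := (hpart a).1 h; exact ⟨.inr (.inl t), rfl⟩
    | 2 => exact ⟨.inr (.inr (bot.symm ⟨a, h⟩)), by simp [g]⟩
  let e := Equiv.ofBijective g ⟨hinj, hsurj⟩
  exact ⟨_, _, e.symm, fun a => (hg _).symm.trans (congrArg part (e.apply_symm_apply a)),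
    fun t => rfl⟩

def HasBlockForm {m n : ℕ} (A : Fin m → Fin n → Bool) : Prop :=
  ∃ (m₁ k m₂ n₁ n₂ : ℕ), 2 ≤ k ∧
    ∃ (e : Fin m ≃ (Fin m₁ ⊕ Fin k ⊕ Fin m₂))
      (f : Fin n ≃ (Fin n₁ ⊕ Fin k ⊕ Fin n₂))
      (A₁ : Fin m₁ → Fin n₁ → Bool) (B : Fin k → Fin k → Bool)
      (A₂ : Fin m₂ → Fin n₂ → Bool),
      Simple A₁ ∧ Simple A₂ ∧ ¬ IsConfig FT A₁ ∧ ¬ IsConfig FT A₂ ∧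
      ((∀ i j, B i j = decide (i = j)) ∨ (∀ i j, B i j = decide (i ≠ j))) ∧
      ∀ i j, A i j = blockEntry A₁ B A₂ (e i) (f j)

theorem hasBlockForm_of_triangular {m n k : ℕ} {A : Fin m → Fin n → Bool} (hS : Simple A)
    (hav : ¬ IsConfig FT A) (hk : 2 ≤ k) (rowBlock : Fin m → Fin 3) (colBlock : Fin n → Fin 3)
    {r : Fin k → Fin m} {c : Fin k → Fin n} (hr : Injective r) (hc : Injective c)
    (hrow : ∀ i, rowBlock i = 1 ↔ i ∈ Set.range r) (hcol : ∀ j, colBlock j = 1 ↔ j ∈ Set.range c)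
    (hlow : ∀ i j, colBlock j < rowBlock i → A i j = true)
    (hup : ∀ i j, rowBlock i < colBlock j → A i j = false)
    (hB : (∀ t t', A (r t) (c t') = decide (t = t')) ∨ ∀ t t', A (r t) (c t') = decide (t ≠ t')) :
    HasBlockForm A := by
  obtain ⟨m₁, m₂, e, he, her⟩ := exists_equiv_blockIndex rowBlock r hr hrow
  obtain ⟨n₁, n₂, f, hf, hfc⟩ := exists_equiv_blockIndex colBlock c hc hcol
  let A' p q := A (e.symm p) (f.symm q)
  have hA' : A' = blockEntry _ _ _ := funext₂ <| eq_blockEntry_of_triangular A'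
    (fun p q h => hlow _ _ (by rwa [← hf, ← he, e.apply_symm_apply, f.apply_symm_apply]))
    (fun p q h => hup _ _ (by rwa [← hf, ← he, e.apply_symm_apply, f.apply_symm_apply]))
  have hSA' : Simple A' := hS.submatrix e.symm.surjective f.symm.injective
  rw [hA'] at hSA'
  refine ⟨m₁, k, m₂, n₁, n₂, hk, e, f, _, fun t t' => A' (.inr (.inl t)) (.inr (.inl t')), _,
    hSA'.of_blockEntry_left, hSA'.of_blockEntry_right,
    fun h => hav (h.of_submatrix (Embedding.inl.trans e.symm.toEmbedding)
      (Embedding.inl.trans f.symm.toEmbedding)),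
    fun h => hav (h.of_submatrix ((Embedding.inr.trans Embedding.inr).trans e.symm.toEmbedding)
      ((Embedding.inr.trans Embedding.inr).trans f.symm.toEmbedding)), ?_, fun i j => ?_⟩
  · simpa only [A', her, hfc] using hB
  · rw [← hA']
    simp [A']

theorem hasBlockForm_of_isSwapFamily {m n : ℕ} {A : Fin m → Fin n → Bool} (hS : Simple A)
    (hav : ¬ IsConfig FT A) {M : Finset (Fin n)} (hM : 1 < #M)
    (hswap : IsSwapFamily (colSupport A) M)
    (hcols : ∀ j ∉ M, (∀ c ∈ M, colSupport A c ⊆ colSupport A j) ∨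
      ∀ c ∈ M, colSupport A j ⊆ colSupport A c) :
    HasBlockForm A := by
  obtain ⟨ζ, hζ⟩ := hswap.exists_isDiagonalOrCodiagonal hM
  let enum := M.orderEmbOfFin rfl
  have henum j : j ∈ Set.range enum ↔ j ∈ M := by rw [range_orderEmbOfFin]; rfl
  have hmem t : enum t ∈ M := orderEmbOfFin_mem M rfl t
  refine hasBlockForm_of_triangular hS hav hM (rowPart (colSupport A) M) (colPart (colSupport A) M)
    (fun t t' h => enum.injective (hζ.injOn (hmem t) (hmem t') h)) enum.injective
    (fun i => ?_) (fun j => ?_) (fun i j h => ?_) (fun i j h => ?_) ?_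
  · rw [rowPart_eq_one_iff, hζ.exists_mem_and_not_forall_mem_iff hswap hM]
    simp [← henum]
  · exact colPart_eq_one_iff.trans (henum j).symm
  · exact mem_colSupport.1 (mem_of_colPart_lt_rowPart (card_pos.1 (by omega)) h)
  · exact Bool.eq_false_iff.2 fun h' => not_mem_of_rowPart_lt_colPart hcols h (mem_colSupport.2 h')
  · rcases hζ with hζ | hζ
    · exact .inl fun t t' => Bool.eq_iff_iff.2 <| by
        simpa [mem_colSupport, enum.injective.eq_iff] using hζ _ (hmem t') _ (hmem t)
    · exact .inr fun t t' => Bool.eq_iff_iff.2 <| by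
        simpa [mem_colSupport, enum.injective.eq_iff] using hζ _ (hmem t') _ (hmem t)

/-- If a simple matrix `A` avoids `Fᵀ` but contains `I₂`, then after suitable row and
column permutations `A` has the block form `[[A₁,0,0],[1,B,0],[1,1,A₂]]` where `A₁, A₂`
are simple matrices avoiding `Fᵀ` and `B = I_k` or `I_k^c` for some `k ≥ 2`. -/
theorem stmt1 (m n : ℕ) (A : Fin m → Fin n → Bool) (hS : Simple A)
    (hav : ¬ IsConfig FT A) (hI : IsConfig I2 A) :
    ∃ (m₁ k m₂ n₁ n₂ : ℕ), 2 ≤ k ∧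
      ∃ (e : Fin m ≃ (Fin m₁ ⊕ Fin k ⊕ Fin m₂))
        (f : Fin n ≃ (Fin n₁ ⊕ Fin k ⊕ Fin n₂))
        (A₁ : Fin m₁ → Fin n₁ → Bool) (B : Fin k → Fin k → Bool)
        (A₂ : Fin m₂ → Fin n₂ → Bool),
        Simple A₁ ∧ Simple A₂ ∧ ¬ IsConfig FT A₁ ∧ ¬ IsConfig FT A₂ ∧
        ((∀ i j, B i j = decide (i = j)) ∨ (∀ i j, B i j = decide (i ≠ j))) ∧
        ∀ i j, A i j = blockEntry A₁ B A₂ (e i) (f j) := by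
  obtain ⟨j₁, j₂, h₁₂, h₂₁⟩ := exists_not_subset_of_isConfig_I2 hI
  let M : Finset (Fin n) := {j | #(colSupport A j) = #(colSupport A j₁)}
  have hM : 1 < #M := one_lt_card.2 ⟨j₁, by simp [M], j₂,
    by simp [M, card_colSupport_eq_of_not_subset hav h₂₁ h₁₂], by rintro rfl; exact h₁₂ subset_rfl⟩
  refine hasBlockForm_of_isSwapFamily hS hav hM
    (fun a ha b hb hab => card_colSupport_sdiff_eq_one hS hav hab (by simp_all [M])) fun j hj => ?_
  rcases lt_or_gt_of_ne (by simpa [M] using hj) with h | h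
  · exact .inr fun c hc => colSupport_subset_of_card_lt hav (by simp_all [M])
  · exact .inl fun c hc => colSupport_subset_of_card_lt hav (by simp_all [M])
end

section
/- Let F = [[0,0,1],[1,1,0]]. Then forb(m, F) = forb(m, F^T) = ⌊3m/2⌋ + 1, where forb(m, F) is the maximum number of columns of a simple m-rowed (0,1)-matrix avoiding F as a configuration. -/
/-- `F = [[0,0,1],[1,1,0]]`. -/
def Fcfg : Fin 2 → Fin 3 → Bool :=
  ![![false, false, true], ![true, true, false]]

/-!
Read the columns of a simple matrix as a family `S` of subsets of the rows. Deleting a row `x`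
gives `#S = #(S with x erased) + #C_x`, where `C_x` consists of the sets `C ∌ x` with `C` and
`C ∪ {x}` both in `S`. Avoiding `F`, resp. `Fᵀ`, is inherited by the erased family and forces
`#C_x ≤ 2`. Induction on the number of rows then gives the bound `⌊3m/2⌋ + 1`, except when
`m` is odd and `#C_x = 2` for every row `x`. In that case the two sets in `C_x` differ in exactly
one row `y` (they span a square `C, C ∪ {x}, C ∪ {y}, C ∪ {x, y}` in `S`), and `x ↦ y` is a
fixed-point-free involution of the rows, so `m` is even after all.

The bound is attained by the `m + 1` initial segments `[0, j)` together with the `⌊m/2⌋` sets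
`[0, 2t) ∪ {2t + 1}`.
-/

open Finset

section SetFamily

variable {α : Type*} [DecidableEq α] {S : Finset (Finset α)} {R C D : Finset α} {x y y' : α}

/-- The columns that become repeated when row `x` is deleted. -/
def pairFamily (x : α) (S : Finset (Finset α)) : Finset (Finset α) :=
  S.memberSubfamily x ∩ S.nonMemberSubfamily x

lemma mem_pairFamily : C ∈ pairFamily x S ↔ C ∈ S ∧ insert x C ∈ S ∧ x ∉ C := by
  simp only [pairFamily, mem_inter, mem_memberSubfamily, mem_nonMemberSubfamily]
  tauto

lemma card_eq_card_image_erase_add_card_pairFamily (x : α) (S : Finset (Finset α)) :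
    #S = #(S.image (·.erase x)) + #(pairFamily x S) := by
  rw [← memberSubfamily_union_nonMemberSubfamily, pairFamily, card_union_add_card_inter,
    card_memberSubfamily_add_card_nonMemberSubfamily]

def ContainsSquare (S : Finset (Finset α)) (x y : α) : Prop :=
  ∃ C, y ∉ C ∧ C ∈ pairFamily x S ∧ insert y C ∈ pairFamily x S

lemma ContainsSquare.ne (h : ContainsSquare S x y) : x ≠ y := by
  obtain ⟨C, -, -, hCy⟩ := h
  rintro rfl
  exact (mem_pairFamily.1 hCy).2.2 (mem_insert_self x C)

lemma ContainsSquare.symm (h : ContainsSquare S x y) : ContainsSquare S y x := by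
  have hxy := h.ne
  obtain ⟨C, hyC, hC, hCy⟩ := h
  rw [mem_pairFamily] at hC hCy
  refine ⟨C, hC.2.2, mem_pairFamily.2 ⟨hC.1, hCy.1, hyC⟩,
    mem_pairFamily.2 ⟨hC.2.1, insert_comm x y C ▸ hCy.2.1, ?_⟩⟩
  simp [hxy.symm, hyC]

lemma ContainsSquare.unique (h2 : #(pairFamily x S) = 2) (hy : ContainsSquare S x y)
    (hy' : ContainsSquare S x y') : y = y' := by
  obtain ⟨C, hyC, hC, hCy⟩ := hy
  obtain ⟨C', hy'C', hC', hC'y'⟩ := hy'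
  have hpairs : pairFamily x S = {C, insert y C} := by
    have hne : C ≠ insert y C := fun h => hyC (h ▸ mem_insert_self y C)
    refine (eq_of_subset_of_card_le (insert_subset hC (singleton_subset_iff.2 hCy)) ?_).symm
    rw [h2, card_pair hne]
  have hcardC := card_insert_of_notMem hyC
  have hcardC' := card_insert_of_notMem hy'C'
  rw [hpairs, mem_insert, mem_singleton] at hC' hC'y'
  rcases hC' with rfl | rfl <;> rcases hC'y' with h | h
  · exact absurd (h ▸ mem_insert_self y' C') hy'C'
  · have := h ▸ mem_insert_self y' C'
    rw [mem_insert] at this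
    exact this.resolve_right hy'C' |>.symm
  · rw [h] at hcardC'; omega
  · rw [h] at hcardC'; omega

lemma exists_containsSquare_of_mem_pairFamily (hC : C ∈ pairFamily x S)
    (hD : D ∈ pairFamily x S) (hCD : C ⊆ D) (hcard : #C + 1 = #D) :
    ∃ y, ContainsSquare S x y := by
  obtain ⟨y, hyC, rfl⟩ := exists_eq_insert_iff.2 ⟨hCD, hcard⟩
  exact ⟨y, C, hyC, hC, hD⟩

lemma even_card_of_forall_containsSquare (hS : S ⊆ R.powerset)
    (h2 : ∀ i ∈ R, #(pairFamily i S) = 2) (hsq : ∀ x ∈ R, ∃ y, ContainsSquare S x y) :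
    Even #R := by
  choose p hp using hsq
  have hpR : ∀ x hx, p x hx ∈ R := by
    intro x hx
    obtain ⟨C, -, -, hCy⟩ := hp x hx
    exact mem_powerset.1 (hS (mem_pairFamily.1 hCy).1) (mem_insert_self _ C)
  have hpp : ∀ x hx, p (p x hx) (hpR x hx) = x := fun x hx =>
    ((hp _ (hpR x hx)).unique (h2 _ (hpR x hx)) (hp x hx).symm)
  have hsum : ∑ _x ∈ R, (1 : ZMod 2) = 0 :=
    sum_involution p (fun _ _ => rfl) (fun x hx _ => (hp x hx).ne.symm) hpR hpp
  rw [sum_const, nsmul_one] at hsum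
  exact ZMod.natCast_eq_zero_iff_even.1 hsum

theorem card_le_of_hereditary (P : Finset (Finset α) → Prop)
    (herase : ∀ S x, P S → P (S.image (·.erase x)))
    (hpairs : ∀ S x, P S → #(pairFamily x S) ≤ 2)
    (hsq : ∀ (R : Finset α) S, P S → S ⊆ R.powerset →
      (∀ i ∈ R, #(pairFamily i S) = 2) → ∀ x ∈ R, ∃ y, ContainsSquare S x y)
    (R : Finset α) (S : Finset (Finset α)) (hS : S ⊆ R.powerset) (hP : P S) :
    #S ≤ 3 * #R / 2 + 1 := by
  induction R using Finset.strongInduction generalizing S with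
  | H R ih =>
  rcases R.eq_empty_or_nonempty with rfl | ⟨x₀, hx₀⟩
  · simpa using card_le_card hS
  have step : ∀ x ∈ R, #S ≤ 3 * (#R - 1) / 2 + 1 + #(pairFamily x S) := by
    intro x hx
    have hS' : S.image (·.erase x) ⊆ (R.erase x).powerset := by
      simp only [subset_iff, forall_mem_image, mem_powerset] at hS ⊢
      exact fun A hA => erase_subset_erase x (hS hA)
    have := ih _ (erase_ssubset hx) _ hS' (herase S x hP)
    rw [card_erase_of_mem hx] at this
    rw [card_eq_card_image_erase_add_card_pairFamily x S]
    omega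
  have hR := card_pos.2 ⟨x₀, hx₀⟩
  by_cases h2 : ∀ i ∈ R, #(pairFamily i S) = 2
  · obtain ⟨k, hk⟩ := even_card_of_forall_containsSquare hS h2 (hsq R S hP hS h2)
    have := step x₀ hx₀
    rw [h2 x₀ hx₀] at this
    omega
  · obtain ⟨x, hx, hx2⟩ := not_forall₂.1 h2
    have := step x hx
    have := hpairs S x hP
    omega

/-- Rows `j, k` and columns `A, B, C` would form a copy of `F`. -/
def FFree (S : Finset (Finset α)) : Prop :=
  ∀ j k, ∀ A ∈ S, ∀ B ∈ S, ∀ C ∈ S,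
    j ∉ A → k ∈ A → j ∉ B → k ∈ B → j ∈ C → k ∉ C → A = B

namespace FFree

lemma image_erase (h : FFree S) (x : α) : FFree (S.image (·.erase x)) := by
  simp only [FFree, forall_mem_image]
  intro j k A hA B hB C hC hjA hkA hjB hkB hjC hkC
  have hkx : k ≠ x := ne_of_mem_erase hkA
  have hjx : j ≠ x := ne_of_mem_erase hjC
  simp only [mem_erase, hjx, hkx, ne_eq, not_false_eq_true, true_and] at *
  rw [h j k A hA B hB C hC hjA hkA hjB hkB hjC hkC]

lemma pairFamily_subset {E : Finset α} {j : α} (h : FFree S) (hD : D ∈ pairFamily x S)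
    (hE : E ∈ pairFamily x S) (hjD : j ∈ D) (hjE : j ∉ E) : pairFamily x S ⊆ {D, E} := by
  rw [mem_pairFamily] at hD hE
  have hjx : j ≠ x := fun e => hD.2.2 (e ▸ hjD)
  intro G hG
  rw [mem_pairFamily] at hG
  rw [mem_insert, mem_singleton]
  by_cases hjG : j ∈ G
  · left
    exact h x j G hG.1 D hD.1 _ hE.2.1 hG.2.2 hjG hD.2.2 hjD (mem_insert_self x E)
      (by simp [hjx, hjE])
  · right
    have : insert x G = insert x E := h j x _ hG.2.1 _ hE.2.1 D hD.1
      (by simp [hjx, hjG]) (mem_insert_self x G) (by simp [hjx, hjE]) (mem_insert_self x E)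
      hjD hD.2.2
    rw [← erase_insert hG.2.2, this, erase_insert hE.2.2]

lemma card_pairFamily_le (h : FFree S) (x : α) : #(pairFamily x S) ≤ 2 := by
  by_cases hcomp : ∃ D ∈ pairFamily x S, ∃ E ∈ pairFamily x S, ¬ D ⊆ E
  · obtain ⟨D, hD, E, hE, hDE⟩ := hcomp
    obtain ⟨j, hjD, hjE⟩ := not_subset.1 hDE
    exact (card_le_card (h.pairFamily_subset hD hE hjD hjE)).trans card_le_two
  · push Not at hcomp
    exact (card_le_one.2 fun D hD E hE => (hcomp D hD E hE).antisymm (hcomp E hE D hD)).trans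
      one_le_two

lemma subset_or_subset (h : FFree S) (hC : C ∈ pairFamily x S) (hD : D ∈ pairFamily x S) :
    C ⊆ D ∨ D ⊆ C := by
  by_contra! hCD
  obtain ⟨j, hjC, hjD⟩ := not_subset.1 hCD.1
  obtain ⟨j', hj'D, hj'C⟩ := not_subset.1 hCD.2
  rw [mem_pairFamily] at hC hD
  have hj'x : j' ≠ x := fun e => hD.2.2 (e ▸ hj'D)
  have := h j' j C hC.1 _ hC.2.1 D hD.1 hj'C hjC (by simp [hj'x, hj'C])
    (mem_insert_of_mem hjC) hj'D hjD
  exact hC.2.2 (this ▸ mem_insert_self x C)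

lemma pairFamily_eq {i : α} (h : FFree S) (hC : C ∈ pairFamily x S) (hD : D ∈ pairFamily x S)
    (hiD : i ∈ D) (hiC : i ∉ C) (h2 : 2 ≤ #(pairFamily i S)) :
    pairFamily i S = {insert x C, D.erase i} := by
  rw [mem_pairFamily] at hC hD
  have hix : i ≠ x := fun e => hD.2.2 (e ▸ hiD)
  refine eq_of_subset_of_card_le ?_ (card_le_two.trans h2)
  intro G hG
  rw [mem_pairFamily] at hG
  rw [mem_insert, mem_singleton]
  by_cases hxG : x ∈ G
  · left
    exact h i x G hG.1 _ hC.2.1 D hD.1 hG.2.2 hxG (by simp [hix, hiC]) (mem_insert_self x C)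
      hiD hD.2.2
  · right
    have : insert i G = D := h x i _ hG.2.1 D hD.1 _ hC.2.1 (by simp [hix.symm, hxG])
      (mem_insert_self i G) hD.2.2 hiD (mem_insert_self x C) (by simp [hix, hiC])
    rw [← this, erase_insert hG.2.2]

lemma card_add_one_eq (h : FFree S) (hC : C ∈ pairFamily x S) (hD : D ∈ pairFamily x S)
    (hCD : C ⊂ D) (h2 : ∀ i ∈ D, 2 ≤ #(pairFamily i S)) : #C + 1 = #D := by
  have hlt := card_lt_card hCD
  suffices #(D \ C) ≤ 1 by rw [card_sdiff_of_subset hCD.subset] at this; omega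
  refine card_le_one.2 fun j hj j' hj' => ?_
  by_contra hjj'
  rw [mem_sdiff] at hj hj'
  have hPj := h.pairFamily_eq hC hD hj.1 hj.2 (h2 j hj.1)
  have hPj' := h.pairFamily_eq hC hD hj'.1 hj'.2 (h2 j' hj'.1)
  have hxC : insert x C ∈ pairFamily j S := hPj ▸ mem_insert_self _ _
  have hDj : D.erase j ∈ pairFamily j S := hPj ▸ mem_insert_of_mem (mem_singleton_self _)
  have hDj' : D.erase j' ∈ pairFamily j' S := hPj' ▸ mem_insert_of_mem (mem_singleton_self _)
  rw [mem_pairFamily] at hC hD hxC hDj hDj'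
  have hj'x : j' ≠ x := fun e => hD.2.2 (e ▸ hj'.1)
  have := h j' j _ hDj'.1 _ hxC.2.1 _ hDj.1 (notMem_erase j' D)
    (mem_erase.2 ⟨hjj', hj.1⟩) (by simp [Ne.symm hjj', hj'x, hj'.2]) (mem_insert_self j _)
    (mem_erase.2 ⟨Ne.symm hjj', hj'.1⟩) (notMem_erase j D)
  have hx : x ∈ D.erase j' := this ▸ mem_insert_of_mem (mem_insert_self x C)
  exact hD.2.2 (mem_of_mem_erase hx)

lemma exists_containsSquare (h : FFree S) (hS : S ⊆ R.powerset)
    (h2 : ∀ i ∈ R, #(pairFamily i S) = 2) (hx : x ∈ R) : ∃ y, ContainsSquare S x y := by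
  obtain ⟨C, D, hCD, hpairs⟩ := card_eq_two.1 (h2 x hx)
  have hC : C ∈ pairFamily x S := hpairs ▸ mem_insert_self C {D}
  have hD : D ∈ pairFamily x S := hpairs ▸ mem_insert_of_mem (mem_singleton_self D)
  have h2' : ∀ E ∈ pairFamily x S, ∀ i ∈ E, 2 ≤ #(pairFamily i S) := fun E hE i hi =>
    (h2 i (mem_powerset.1 (hS (mem_pairFamily.1 hE).1) hi)).ge
  rcases h.subset_or_subset hC hD with hsub | hsub
  · exact exists_containsSquare_of_mem_pairFamily hC hD hsub
      (h.card_add_one_eq hC hD (ssubset_of_subset_of_ne hsub hCD) (h2' D hD))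
  · exact exists_containsSquare_of_mem_pairFamily hD hC hsub
      (h.card_add_one_eq hD hC (ssubset_of_subset_of_ne hsub hCD.symm) (h2' C hC))

end FFree

/-- Two rows of `A \ B` and one row of `B \ A` would form a copy of `Fᵀ` on the columns
`B, A`. -/
def FTFree (S : Finset (Finset α)) : Prop :=
  ∀ A ∈ S, ∀ B ∈ S, #(A \ B) ≤ 1 ∨ B ⊆ A

namespace FTFree

lemma image_erase (h : FTFree S) (x : α) : FTFree (S.image (·.erase x)) := by
  simp only [FTFree, forall_mem_image]
  intro A hA B hB
  refine (h A hA B hB).imp (fun hAB => (card_le_card ?_).trans hAB) (erase_subset_erase x)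
  intro z
  simp only [mem_sdiff, mem_erase]
  tauto

lemma subset_or_subset (h : FTFree S) (hC : C ∈ pairFamily x S) (hD : D ∈ pairFamily x S) :
    C ⊆ D ∨ D ⊆ C := by
  rw [mem_pairFamily] at hC hD
  rcases h _ hC.2.1 D hD.1 with hcard | hsub
  · left
    intro z hzC
    by_contra hzD
    have hxz : x ≠ z := fun e => hC.2.2 (e ▸ hzC)
    have : {x, z} ⊆ insert x C \ D := by
      simp [insert_subset_iff, hD.2.2, hzC, hzD]
    have := card_le_card this
    rw [card_pair hxz] at this
    omega
  · right
    intro z hzD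
    exact (mem_insert.1 (hsub hzD)).resolve_left (fun e => hD.2.2 (e ▸ hzD))

lemma card_add_one_eq (h : FTFree S) (hC : C ∈ pairFamily x S) (hD : D ∈ pairFamily x S)
    (hCD : C ⊂ D) : #C + 1 = #D := by
  have hlt := card_lt_card hCD
  rw [mem_pairFamily] at hC hD
  rcases h D hD.1 _ hC.2.1 with hcard | hsub
  · rw [sdiff_insert_of_notMem hD.2.2, card_sdiff_of_subset hCD.subset] at hcard
    omega
  · exact absurd (hsub (mem_insert_self x C)) hD.2.2

lemma card_add_one_eq_or (h : FTFree S) (hC : C ∈ pairFamily x S) (hD : D ∈ pairFamily x S)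
    (hCD : C ≠ D) : #C + 1 = #D ∨ #D + 1 = #C :=
  (h.subset_or_subset hC hD).imp
    (fun hsub => h.card_add_one_eq hC hD (ssubset_of_subset_of_ne hsub hCD))
    (fun hsub => h.card_add_one_eq hD hC (ssubset_of_subset_of_ne hsub hCD.symm))

lemma card_pairFamily_le (h : FTFree S) (x : α) : #(pairFamily x S) ≤ 2 := by
  by_contra! h3
  obtain ⟨A, hA, B, hB, C, hC, hAB, hAC, hBC⟩ := two_lt_card.1 h3
  have := h.card_add_one_eq_or hA hB hAB
  have := h.card_add_one_eq_or hA hC hAC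
  have := h.card_add_one_eq_or hB hC hBC
  omega

lemma exists_containsSquare (h : FTFree S) (h2 : #(pairFamily x S) = 2) :
    ∃ y, ContainsSquare S x y := by
  obtain ⟨C, D, hCD, hpairs⟩ := card_eq_two.1 h2
  have hC : C ∈ pairFamily x S := hpairs ▸ mem_insert_self C {D}
  have hD : D ∈ pairFamily x S := hpairs ▸ mem_insert_of_mem (mem_singleton_self D)
  rcases h.subset_or_subset hC hD with hsub | hsub
  · exact exists_containsSquare_of_mem_pairFamily hC hD hsub
      (h.card_add_one_eq hC hD (ssubset_of_subset_of_ne hsub hCD))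
  · exact exists_containsSquare_of_mem_pairFamily hD hC hsub
      (h.card_add_one_eq hD hC (ssubset_of_subset_of_ne hsub hCD.symm))

end FTFree

end SetFamily

section Columns

variable {m n : ℕ}

def columnFamily (A : Fin m → Fin n → Bool) : Finset (Finset (Fin m)) :=
  univ.image fun j => univ.filter (A · j)

lemma card_columnFamily {A : Fin m → Fin n → Bool} (hA : Simple A) : #(columnFamily A) = n := by
  rw [columnFamily, card_image_of_injective, card_univ, Fintype.card_fin]
  intro j j' hjj'
  exact hA (funext fun i => Bool.eq_iff_iff.2 (by simpa using congr(i ∈ $hjj')))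

lemma fFree_columnFamily {A : Fin m → Fin n → Bool} (hA : ¬ IsConfig Fcfg A) :
    FFree (columnFamily A) := by
  simp only [FFree, columnFamily, forall_mem_image, mem_univ, forall_const, mem_filter,
    true_and, Bool.not_eq_true]
  intro j k a b c hja hka hjb hkb hjc hkc
  by_contra hab
  have hjk : j ≠ k := by rintro rfl; simp_all
  have hab' : a ≠ b := by rintro rfl; exact hab rfl
  have hac : a ≠ c := by rintro rfl; simp_all
  have hbc : b ≠ c := by rintro rfl; simp_all
  have hr : Function.Injective ![j, k] := by
    simp [Function.Injective, Fin.forall_fin_two, hjk, hjk.symm]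
  have hc : Function.Injective ![a, b, c] := by
    simp [Function.Injective, Fin.forall_fin_succ, hab', hac, hbc, hab'.symm, hac.symm, hbc.symm]
  exact hA ⟨⟨_, hr⟩, ⟨_, hc⟩, by simp [Fin.forall_fin_succ, Fcfg, *]⟩

lemma fTFree_columnFamily {A : Fin m → Fin n → Bool} (hA : ¬ IsConfig FT A) :
    FTFree (columnFamily A) := by
  simp only [FTFree, columnFamily, forall_mem_image, mem_univ, forall_const]
  intro a b
  by_contra! hab
  obtain ⟨i₁, hi₁, i₂, hi₂, hi₁₂⟩ := one_lt_card.1 hab.1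
  obtain ⟨i₃, hi₃b, hi₃a⟩ := not_subset.1 hab.2
  simp only [mem_sdiff, mem_filter, mem_univ, true_and, Bool.not_eq_true]
    at hi₁ hi₂ hi₃b hi₃a
  have hi₁₃ : i₁ ≠ i₃ := by rintro rfl; simp_all
  have hi₂₃ : i₂ ≠ i₃ := by rintro rfl; simp_all
  have hba : b ≠ a := by rintro rfl; simp_all
  have hr : Function.Injective ![i₁, i₂, i₃] := by
    simp [Function.Injective, Fin.forall_fin_succ, hi₁₂, hi₁₃, hi₂₃, hi₁₂.symm,
      hi₁₃.symm, hi₂₃.symm]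
  have hc : Function.Injective ![b, a] := by
    simp [Function.Injective, Fin.forall_fin_two, hba, hba.symm]
  exact hA ⟨⟨_, hr⟩, ⟨_, hc⟩, by simp [Fin.forall_fin_succ, FT, *]⟩

lemma card_le_of_not_isConfig_Fcfg {A : Fin m → Fin n → Bool} (hS : Simple A)
    (hA : ¬ IsConfig Fcfg A) : n ≤ 3 * m / 2 + 1 := by
  have := card_le_of_hereditary FFree (fun S x h => h.image_erase x)
    (fun S x h => h.card_pairFamily_le x) (fun R S h hS h2 x hx => h.exists_containsSquare hS h2 hx)
    univ (columnFamily A) (fun _ _ => mem_powerset.2 (subset_univ _)) (fFree_columnFamily hA)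
  rwa [card_columnFamily hS, card_univ, Fintype.card_fin] at this

lemma card_le_of_not_isConfig_FT {A : Fin m → Fin n → Bool} (hS : Simple A)
    (hA : ¬ IsConfig FT A) : n ≤ 3 * m / 2 + 1 := by
  have := card_le_of_hereditary FTFree (fun S x h => h.image_erase x)
    (fun S x h => h.card_pairFamily_le x)
    (fun R S h _ h2 x hx => h.exists_containsSquare (h2 x hx))
    univ (columnFamily A) (fun _ _ => mem_powerset.2 (subset_univ _)) (fTFree_columnFamily hA)
  rwa [card_columnFamily hS, card_univ, Fintype.card_fin] at this

end Columns

/-- Column `j` is `[0, j)` for `j ≤ m` and `[0, 2t) ∪ {2t + 1}` for `j = m + 1 + t`. -/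
def extremalCol (m j i : ℕ) : Bool :=
  if j ≤ m then decide (i < j) else decide (i < 2 * (j - (m + 1)) ∨ i = 2 * (j - (m + 1)) + 1)

def extremalMatrix (m : ℕ) : Fin m → Fin (3 * m / 2 + 1) → Bool :=
  fun i j => extremalCol m j i

lemma simple_extremalMatrix (m : ℕ) : Simple (extremalMatrix m) := by
  intro j j' hjj'
  have key : ∀ i < m, extremalCol m j i = extremalCol m j' i := fun i hi =>
    congrFun hjj' ⟨i, hi⟩
  -- two distinct columns already differ in one of these six rows
  have h1 := key (j - 1)
  have h2 := key (j' - 1)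
  have h3 := key (2 * (j - (m + 1)))
  have h4 := key (2 * (j - (m + 1)) + 1)
  have h5 := key (2 * (j' - (m + 1)))
  have h6 := key (2 * (j' - (m + 1)) + 1)
  have hj := j.isLt
  have hj' := j'.isLt
  ext
  unfold extremalCol at h1 h2 h3 h4 h5 h6
  split_ifs at h1 h2 h3 h4 h5 h6 <;>
    simp only [decide_eq_decide, iff_true, true_iff, or_true]
      at h1 h2 h3 h4 h5 h6 <;> omega

lemma extremalMatrix_not_isConfig_Fcfg (m : ℕ) : ¬ IsConfig Fcfg (extremalMatrix m) := by
  rintro ⟨r, c, h⟩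
  have hc : (c 0 : ℕ) ≠ c 1 := fun e => absurd (c.injective (Fin.ext e)) (by decide)
  have h00 : extremalCol m (c 0) (r 0) = false := (h 0 0).symm
  have h01 : extremalCol m (c 1) (r 0) = false := (h 0 1).symm
  have h02 : extremalCol m (c 2) (r 0) = true := (h 0 2).symm
  have h10 : extremalCol m (c 0) (r 1) = true := (h 1 0).symm
  have h11 : extremalCol m (c 1) (r 1) = true := (h 1 1).symm
  have h12 : extremalCol m (c 2) (r 1) = false := (h 1 2).symm
  unfold extremalCol at h00 h01 h02 h10 h11 h12
  split_ifs at h00 h01 h02 h10 h11 h12 <;>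
    simp only [decide_eq_true_eq, decide_eq_false_iff_not, not_or, not_lt]
      at h00 h01 h02 h10 h11 h12 <;> omega

lemma extremalMatrix_not_isConfig_FT (m : ℕ) : ¬ IsConfig FT (extremalMatrix m) := by
  rintro ⟨r, c, h⟩
  have hr : (r 0 : ℕ) ≠ r 1 := fun e => absurd (r.injective (Fin.ext e)) (by decide)
  have hc : (c 0 : ℕ) ≠ c 1 := fun e => absurd (c.injective (Fin.ext e)) (by decide)
  have h00 : extremalCol m (c 0) (r 0) = false := (h 0 0).symm
  have h10 : extremalCol m (c 0) (r 1) = false := (h 1 0).symm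
  have h20 : extremalCol m (c 0) (r 2) = true := (h 2 0).symm
  have h01 : extremalCol m (c 1) (r 0) = true := (h 0 1).symm
  have h11 : extremalCol m (c 1) (r 1) = true := (h 1 1).symm
  have h21 : extremalCol m (c 1) (r 2) = false := (h 2 1).symm
  unfold extremalCol at h00 h10 h20 h01 h11 h21
  split_ifs at h00 h10 h20 h01 h11 h21 <;>
    simp only [decide_eq_true_eq, decide_eq_false_iff_not, not_or, not_lt]
      at h00 h10 h20 h01 h11 h21 <;> omega

/-- `forb(m,F) = forb(m,Fᵀ) = ⌊3m/2⌋ + 1` for `F = [[0,0,1],[1,1,0]]`. -/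
theorem stmt3 (m : ℕ) :
    IsGreatest {n : ℕ | ∃ A : Fin m → Fin n → Bool, Simple A ∧ ¬ IsConfig Fcfg A}
      (3 * m / 2 + 1) ∧
    IsGreatest {n : ℕ | ∃ A : Fin m → Fin n → Bool, Simple A ∧ ¬ IsConfig FT A}
      (3 * m / 2 + 1) :=
  ⟨⟨⟨extremalMatrix m, simple_extremalMatrix m, extremalMatrix_not_isConfig_Fcfg m⟩,
      fun _ ⟨_, hS, hA⟩ => card_le_of_not_isConfig_Fcfg hS hA⟩,
    ⟨⟨extremalMatrix m, simple_extremalMatrix m, extremalMatrix_not_isConfig_FT m⟩,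
      fun _ ⟨_, hS, hA⟩ => card_le_of_not_isConfig_FT hS hA⟩⟩
end

section
/- For m even, the extremal simple m-rowed matrix avoiding the configuration F = [[0,0,1],[1,1,0]] with forb(m,F) = ⌊3m/2⌋ + 1 columns is unique up to row and column permutations: it is the block staircase matrix with m/2 diagonal blocks each equal to I_2 (plus the leading all-ones-below column structure), i.e., all diagonal blocks B_i = I_2. -/
/-- The block staircase matrix on `2t` rows (grouped into `t` blocks of size 2) whose
`t+1` staircase columns are all-ones above a cut / all-zeros below, and whose `t`
diagonal blocks are each `I₂` (extended by ones above the block, zeros below). -/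
def extMat (t : ℕ) : (Fin t × Fin 2) → (Fin (t + 1) ⊕ Fin t × Fin 2) → Bool
  | (b, _), Sum.inl c => decide ((b : ℕ) < (c : ℕ))
  | (b, i), Sum.inr (b', j) => if b = b' then decide (i = j) else decide ((b : ℕ) < (b' : ℕ))

/-!
Take a row `r₁` of maximum weight. Since `F` is forbidden, any row not below `r₁` differs from
it by a single swap: `r₁ = T ∪ {x}` and `r₂ = T ∪ {y}`. If every row lies below `r₁`, at most
one column misses `r₁`, and the columns through `r₁` stay distinct once `r₁` is deleted.
Otherwise delete `r₁, r₂`: the columns that are `11` on them stay distinct, so do those that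
are `00`, and forbidding `F` allows at most one coincidence between an `11` and a `00` column.
Induction on `m` gives `forb(m, F) ≤ ⌊3m/2⌋ + 1`.

For `m = 2t` and `3t + 1` columns every bound is attained: the pair `r₁, r₂` exists, exactly one
coincidence `U ~ V` occurs, and the restriction to the other rows is extremal, hence by
induction the staircase matrix, in which every row has two zeros. Together with the
coincidence this forces the `00` columns to be null and `x`, `y` to be the unit columns of
`r₁`, `r₂`, so `r₁, r₂` form a new top block `I₂`.
-/

open Finset Function

universe u

section Configurations

variable {α β : Type*}

lemma IsConfig.of_submatrix_s4 {γ δ ι κ : Type*} {F : ι → κ → Bool} {A : α → β → Bool}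
    {B : γ → δ → Bool} (hB : IsConfig F B) {u : γ → α} {v : δ → β} (hu : Injective u)
    (hv : Injective v) (hBA : ∀ i j, B i j = A (u i) (v j)) : IsConfig F A := by
  obtain ⟨r, c, hrc⟩ := hB
  exact ⟨⟨u ∘ r, hu.comp r.injective⟩, ⟨v ∘ c, hv.comp c.injective⟩,
    fun i j => (hrc i j).trans (hBA _ _)⟩

lemma isConfig_Fcfg {A : α → β → Bool} {a b : α} {j₁ j₂ j₃ : β} (hab : a ≠ b) (hj : j₁ ≠ j₂)
    (ha₁ : A a j₁ = false) (ha₂ : A a j₂ = false) (ha₃ : A a j₃ = true)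
    (hb₁ : A b j₁ = true) (hb₂ : A b j₂ = true) (hb₃ : A b j₃ = false) : IsConfig Fcfg A := by
  have hj₁₃ : j₁ ≠ j₃ := by rintro rfl; simp_all
  have hj₂₃ : j₂ ≠ j₃ := by rintro rfl; simp_all
  refine ⟨⟨![a, b], by simp [Injective, Fin.forall_fin_two, hab, hab.symm]⟩,
    ⟨![j₁, j₂, j₃], by simp [Injective, Fin.forall_fin_succ, hj, hj.symm, hj₁₃, hj₁₃.symm,
      hj₂₃, hj₂₃.symm]⟩, fun i j => ?_⟩
  change Fcfg i j = A (![a, b] i) (![j₁, j₂, j₃] j)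
  fin_cases i <;> fin_cases j <;> simp [Fcfg, ha₁, ha₂, ha₃, hb₁, hb₂, hb₃]

end Configurations

section Support

variable {α β : Type*} [Fintype β] [DecidableEq β] {A : α → β → Bool}

def rowSupport (A : α → β → Bool) (a : α) : Finset β := univ.filter fun j => A a j = true

omit [DecidableEq β] in
@[simp] lemma mem_rowSupport {a : α} {j : β} : j ∈ rowSupport A a ↔ A a j = true := by
  simp [rowSupport]

lemma subset_of_one_lt_card_sdiff (hav : ¬ IsConfig Fcfg A) {a b : α} (hab : a ≠ b)
    (h : 1 < (rowSupport A b \ rowSupport A a).card) : rowSupport A a ⊆ rowSupport A b := by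
  by_contra hsub
  obtain ⟨j₃, hj₃a, hj₃b⟩ := not_subset.mp hsub
  obtain ⟨j₁, hj₁, j₂, hj₂, hj⟩ := one_lt_card.mp h
  simp only [mem_sdiff, mem_rowSupport, Bool.not_eq_true] at hj₁ hj₂ hj₃a hj₃b
  exact hav (isConfig_Fcfg hab hj hj₁.2 hj₂.2 hj₃a hj₁.1 hj₂.1 hj₃b)

lemma sdiff_eq_singleton_of_card_le (hav : ¬ IsConfig Fcfg A) {a b : α} {j : β}
    (hcard : (rowSupport A a).card ≤ (rowSupport A b).card)
    (hj : j ∈ rowSupport A a \ rowSupport A b) :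
    rowSupport A a \ rowSupport A b = {j} ∧ ∃ w, rowSupport A b \ rowSupport A a = {w} := by
  have hab : a ≠ b := by rintro rfl; simp at hj
  obtain ⟨w, hw⟩ : (rowSupport A b \ rowSupport A a).Nonempty := by
    rw [sdiff_nonempty]
    intro hba
    rw [eq_of_subset_of_card_le hba hcard] at hj
    simp at hj
  have hle_ab : (rowSupport A a \ rowSupport A b).card ≤ 1 := by
    by_contra h
    exact (mem_sdiff.mp hw).2
      (subset_of_one_lt_card_sdiff hav hab.symm (not_le.mp h) (mem_sdiff.mp hw).1)
  have hle_ba : (rowSupport A b \ rowSupport A a).card ≤ 1 := by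
    by_contra h
    exact (mem_sdiff.mp hj).2
      (subset_of_one_lt_card_sdiff hav hab (not_le.mp h) (mem_sdiff.mp hj).1)
  exact ⟨eq_singleton_iff_unique_mem.mpr ⟨hj, fun i hi => card_le_one.mp hle_ab i hi j hj⟩,
    w, eq_singleton_iff_unique_mem.mpr ⟨hw, fun i hi => card_le_one.mp hle_ba i hi w hw⟩⟩

end Support

section Restriction

variable {α β γ : Type*}

def colMat (S : Finset (γ → Bool)) : γ → S → Bool := fun i f => f.1 i

lemma simple_colMat (S : Finset (γ → Bool)) : Simple (colMat S) :=
  fun _ _ h => Subtype.ext (funext fun i => congrFun h i)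

variable [Fintype α] {p : α → Prop} [DecidablePred p]

def restrictCols (A : α → β → Bool) (p : α → Prop) [DecidablePred p] (s : Finset β) :
    Finset ({a // p a} → Bool) :=
  s.image fun j a => A a j

lemma not_isConfig_colMat_restrictCols {ι κ : Type*} {F : ι → κ → Bool} {A : α → β → Bool}
    (hav : ¬ IsConfig F A) (s : Finset β) : ¬ IsConfig F (colMat (restrictCols A p s)) := by
  choose v hv using fun f : restrictCols A p s => mem_image.mp f.2
  have hv_inj : Injective v := fun f g h => Subtype.ext <| by rw [← (hv f).2, ← (hv g).2, h]
  exact fun hF => hav <| hF.of_submatrix_s4 Subtype.val_injective hv_inj fun a f => by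
    rw [colMat, ← (hv f).2]

lemma card_restrictCols {A : α → β → Bool} (hS : Simple A) {s : Finset β}
    (hs : ∀ j ∈ s, ∀ j' ∈ s, ∀ a, ¬ p a → A a j = A a j') :
    (restrictCols A p s).card = s.card := by
  refine card_image_of_injOn fun j hj j' hj' h => hS (funext fun a => ?_)
  by_cases ha : p a
  · exact congrFun h ⟨a, ha⟩
  · exact hs j hj j' hj' a ha

end Restriction

section PermEquivalent

variable {α β γ δ : Type*}

def PermEquivalent (A : α → β → Bool) (B : γ → δ → Bool) : Prop :=
  ∃ (e : α ≃ γ) (f : β ≃ δ), ∀ i j, A i j = B (e i) (f j)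

lemma permEquivalent_of_forall_exists [Fintype β] [Fintype δ] {A : α → β → Bool}
    {B : γ → δ → Bool} (hS : Simple A) (e : α ≃ γ) (hcard : Fintype.card β = Fintype.card δ)
    (h : ∀ j, ∃ k, ∀ i, A i j = B (e i) k) : PermEquivalent A B := by
  choose f hf using h
  have hf_inj : Injective f := fun j j' hjj' => hS <| funext fun i =>
    (hf j i).trans <| hjj' ▸ (hf j' i).symm
  exact ⟨e, Equiv.ofBijective f ((Fintype.bijective_iff_injective_and_card f).mpr
    ⟨hf_inj, hcard⟩), fun i j => hf j i⟩

end PermEquivalent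

section StaircaseMatrix

variable {s : ℕ}

lemma extMat_inl_zero (p : Fin s × Fin 2) : extMat s p (Sum.inl 0) = false := by
  simp [extMat]

lemma PermEquivalent.exists_two_zeros_of_extMat {α β : Type*} {A : α → β → Bool}
    (h : PermEquivalent A (extMat s)) (i : α) :
    ∃ j j', j ≠ j' ∧ A i j = false ∧ A i j' = false := by
  obtain ⟨e, f, hef⟩ := h
  refine ⟨f.symm (Sum.inl 0), f.symm (Sum.inr ((e i).1, (e i).2.rev)), by simp, ?_, ?_⟩ <;>
    rw [hef, Equiv.apply_symm_apply]
  · exact extMat_inl_zero _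
  · obtain ⟨b, k⟩ := e i
    fin_cases k <;> simp [extMat]

lemma extMat_zero_map_succ (i : Fin 2) (κ : Fin (s + 1) ⊕ Fin s × Fin 2) :
    extMat (s + 1) (0, i) (Sum.map Fin.succ (Prod.map Fin.succ id) κ) = true := by
  rcases κ with c | ⟨b, j⟩
  · simp [extMat]
  · simp [extMat, eq_comm (a := (0 : Fin (s + 1))), Fin.succ_ne_zero]

lemma extMat_succ_map_succ (b : Fin s) (i : Fin 2) (κ : Fin (s + 1) ⊕ Fin s × Fin 2) :
    extMat (s + 1) (b.succ, i) (Sum.map Fin.succ (Prod.map Fin.succ id) κ) =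
      extMat s (b, i) κ := by
  rcases κ with c | ⟨b', j⟩ <;> simp [extMat]

end StaircaseMatrix

section PairLabel

variable {α : Type*} [DecidableEq α] {s : ℕ} {r₁ r₂ : α}

def pairLabel (r₁ r₂ : α) (e : {c // c ≠ r₁ ∧ c ≠ r₂} → Fin s × Fin 2) (c : α) :
    Fin (s + 1) × Fin 2 :=
  if h₁ : c = r₁ then (0, 0)
  else if h₂ : c = r₂ then (0, 1)
  else ((e ⟨c, h₁, h₂⟩).1.succ, (e ⟨c, h₁, h₂⟩).2)

lemma forall_pairLabel (e : {c // c ≠ r₁ ∧ c ≠ r₂} → Fin s × Fin 2)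
    {Q : α → Fin (s + 1) × Fin 2 → Prop} (h₁ : Q r₁ (0, 0)) (h₂ : Q r₂ (0, 1))
    (hc : ∀ c : {c // c ≠ r₁ ∧ c ≠ r₂}, Q c ((e c).1.succ, (e c).2)) (c : α) :
    Q c (pairLabel r₁ r₂ e c) := by
  unfold pairLabel
  split_ifs with hc₁ hc₂
  · exact hc₁ ▸ h₁
  · exact hc₂ ▸ h₂
  · exact hc ⟨c, hc₁, hc₂⟩

lemma pairLabel_injective {e : {c // c ≠ r₁ ∧ c ≠ r₂} → Fin s × Fin 2} (he : Injective e) :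
    Injective (pairLabel r₁ r₂ e) := by
  intro a b hab
  unfold pairLabel at hab
  split_ifs at hab with ha₁ ha₂ hb₁ hb₂ hb₁ hb₂ hb₁ hb₂ <;>
    simp only [Prod.mk.injEq, Fin.zero_eq_one_iff, Fin.one_eq_zero_iff] at hab
  all_goals first
    | (subst_vars; rfl)
    | exact absurd hab.2 (by decide)
    | exact absurd hab.1 (Fin.succ_ne_zero _)
    | exact absurd hab.1.symm (Fin.succ_ne_zero _)
    | exact congrArg Subtype.val (he (Prod.ext (Fin.succ_injective _ hab.1) hab.2))

end PairLabel

section SwapPair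

variable {α β : Type*} [Fintype β] [DecidableEq β] {A : α → β → Bool}

structure IsSwapPair (A : α → β → Bool) (r₁ r₂ : α) (x y : β) : Prop where
  card_le : ∀ c, (rowSupport A c).card ≤ (rowSupport A r₁).card
  sdiff_left : rowSupport A r₁ \ rowSupport A r₂ = {x}
  sdiff_right : rowSupport A r₂ \ rowSupport A r₁ = {y}

lemma subset_or_exists_isSwapPair (hav : ¬ IsConfig Fcfg A) {r : α}
    (hmax : ∀ c, (rowSupport A c).card ≤ (rowSupport A r).card) :
    (∀ c, rowSupport A c ⊆ rowSupport A r) ∨ ∃ r' x y, IsSwapPair A r r' x y := by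
  refine or_iff_not_imp_left.mpr fun h => ?_
  obtain ⟨c, hc⟩ := not_forall.mp h
  obtain ⟨y, hy⟩ := not_subset.mp hc
  obtain ⟨hcy, x, hx⟩ := sdiff_eq_singleton_of_card_le hav (hmax c) (mem_sdiff.mpr hy)
  exact ⟨c, x, y, hmax, hx, hcy⟩

def onesCols (A : α → β → Bool) (a b : α) : Finset β := rowSupport A a ∩ rowSupport A b

def zerosCols (A : α → β → Bool) (a b : α) : Finset β := (rowSupport A a ∪ rowSupport A b)ᶜ

@[simp] lemma mem_onesCols {a b : α} {j : β} :
    j ∈ onesCols A a b ↔ A a j = true ∧ A b j = true := by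
  simp [onesCols]

@[simp] lemma mem_zerosCols {a b : α} {j : β} :
    j ∈ zerosCols A a b ↔ A a j = false ∧ A b j = false := by
  simp [zerosCols]

namespace IsSwapPair

variable {r₁ r₂ : α} {x y : β} (P : IsSwapPair A r₁ r₂ x y)
include P

lemma apply_x : A r₁ x = true ∧ A r₂ x = false := by
  have : x ∈ rowSupport A r₁ \ rowSupport A r₂ := by rw [P.sdiff_left]; exact mem_singleton_self x
  simpa using this

lemma apply_y : A r₂ y = true ∧ A r₁ y = false := by
  have : y ∈ rowSupport A r₂ \ rowSupport A r₁ := by rw [P.sdiff_right]; exact mem_singleton_self y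
  simpa using this

lemma ne : r₁ ≠ r₂ := by
  rintro rfl
  simpa [P.apply_x.1] using P.apply_x.2

lemma card_rowSupport_eq : (rowSupport A r₂).card = (rowSupport A r₁).card := by
  have h₁ := card_sdiff_add_card_inter (rowSupport A r₁) (rowSupport A r₂)
  have h₂ := card_sdiff_add_card_inter (rowSupport A r₂) (rowSupport A r₁)
  rw [P.sdiff_left, card_singleton] at h₁
  rw [P.sdiff_right, card_singleton, inter_comm] at h₂
  omega

lemma card_le_right (c : α) : (rowSupport A c).card ≤ (rowSupport A r₂).card :=
  P.card_rowSupport_eq ▸ P.card_le c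

lemma card_eq_card_onesCols_add_card_zerosCols :
    Fintype.card β = (onesCols A r₁ r₂).card + (zerosCols A r₁ r₂).card + 2 := by
  have h₁ := card_sdiff_add_card_inter (rowSupport A r₁) (rowSupport A r₂)
  have h₂ := card_union_add_card_inter (rowSupport A r₁) (rowSupport A r₂)
  have h₃ := card_add_card_compl (rowSupport A r₁ ∪ rowSupport A r₂)
  have h₄ := P.card_rowSupport_eq
  rw [P.sdiff_left, card_singleton] at h₁
  rw [onesCols, zerosCols]
  omega

lemma subset_of_mem_zerosCols (hav : ¬ IsConfig Fcfg A) {V : β} {c : α}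
    (hV : V ∈ zerosCols A r₁ r₂) (hc : A c V = true) :
    onesCols A r₁ r₂ ⊆ rowSupport A c ∧ rowSupport A c \ rowSupport A r₂ = {V} := by
  rw [mem_zerosCols] at hV
  obtain ⟨h₂, -⟩ := sdiff_eq_singleton_of_card_le hav (P.card_le_right c) (j := V)
    (by simp [hc, hV.2])
  obtain ⟨-, w, hw⟩ := sdiff_eq_singleton_of_card_le hav (P.card_le c) (j := V)
    (by simp [hc, hV.1])
  have hx : x ∈ rowSupport A r₁ \ rowSupport A c := by
    refine mem_sdiff.mpr ⟨by simpa using P.apply_x.1, fun hxc => ?_⟩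
    have hxV : x ∈ rowSupport A c \ rowSupport A r₂ :=
      mem_sdiff.mpr ⟨hxc, by simpa using P.apply_x.2⟩
    rw [h₂, mem_singleton] at hxV
    simpa [hxV, hV.1] using P.apply_x.1
  refine ⟨fun k hk => ?_, h₂⟩
  by_contra hkc
  rw [mem_onesCols] at hk
  have hk' : k ∈ rowSupport A r₁ \ rowSupport A c := mem_sdiff.mpr ⟨by simpa using hk.1, hkc⟩
  rw [hw, mem_singleton] at hk' hx
  simpa [hk', ← hx, P.apply_x.2] using hk.2

lemma apply_eq_true_of_collision (hav : ¬ IsConfig Fcfg A) {U V W : β} {c : α}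
    (hU : U ∈ onesCols A r₁ r₂) (hUV : ∀ d, d ≠ r₁ → d ≠ r₂ → A d U = A d V)
    (hW : W ∈ zerosCols A r₁ r₂) (hc : A c W = true) : A c V = true := by
  have hc₁ : c ≠ r₁ := by rintro rfl; simp [(mem_zerosCols.mp hW).1] at hc
  have hc₂ : c ≠ r₂ := by rintro rfl; simp [(mem_zerosCols.mp hW).2] at hc
  rw [← hUV c hc₁ hc₂]
  simpa using (P.subset_of_mem_zerosCols hav hW hc).1 hU

lemma eq_of_collision (hav : ¬ IsConfig Fcfg A) {U V W : β} {d : α}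
    (hU : U ∈ onesCols A r₁ r₂) (hV : V ∈ zerosCols A r₁ r₂)
    (hUV : ∀ d, d ≠ r₁ → d ≠ r₂ → A d U = A d V) (hW : W ∈ zerosCols A r₁ r₂)
    (hd : A d W = true) : W = V := by
  have hV' : V ∈ rowSupport A d \ rowSupport A r₂ := by
    simpa [P.apply_eq_true_of_collision hav hU hUV hW hd] using (mem_zerosCols.mp hV).2
  rw [(P.subset_of_mem_zerosCols hav hW hd).2, mem_singleton] at hV'
  exact hV'.symm

section Restricted

variable [Fintype α] [DecidableEq α]

lemma card_inter_le_one (hav : ¬ IsConfig Fcfg A) :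
    (restrictCols A (fun c => c ≠ r₁ ∧ c ≠ r₂) (onesCols A r₁ r₂) ∩
      restrictCols A (fun c => c ≠ r₁ ∧ c ≠ r₂) (zerosCols A r₁ r₂)).card ≤ 1 := by
  refine card_le_one.mpr fun f hf g hg => ?_
  simp only [restrictCols, mem_inter, mem_image] at hf hg
  obtain ⟨⟨U, hU, rfl⟩, V, hV, hVU⟩ := hf
  obtain ⟨⟨U', hU', rfl⟩, V', hV', hVU'⟩ := hg
  rw [← hVU, ← hVU']
  funext c
  exact Bool.eq_iff_iff.mpr
    ⟨fun h => P.apply_eq_true_of_collision hav hU'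
      (fun d h₁ h₂ => (congrFun hVU' ⟨d, h₁, h₂⟩).symm) hV h,
    fun h => P.apply_eq_true_of_collision hav hU
      (fun d h₁ h₂ => (congrFun hVU ⟨d, h₁, h₂⟩).symm) hV' h⟩

lemma card_eq_card_restrictCols_add (hS : Simple A) :
    Fintype.card β =
      (restrictCols A (fun c => c ≠ r₁ ∧ c ≠ r₂) (onesCols A r₁ r₂ ∪ zerosCols A r₁ r₂)).card +
      (restrictCols A (fun c => c ≠ r₁ ∧ c ≠ r₂) (onesCols A r₁ r₂) ∩
        restrictCols A (fun c => c ≠ r₁ ∧ c ≠ r₂) (zerosCols A r₁ r₂)).card + 2 := by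
  have h₁ := card_restrictCols hS (p := fun c => c ≠ r₁ ∧ c ≠ r₂) (s := onesCols A r₁ r₂)
    fun j hj j' hj' a ha => by
      obtain rfl | rfl : a = r₁ ∨ a = r₂ := by tauto
      all_goals simp_all
  have h₀ := card_restrictCols hS (p := fun c => c ≠ r₁ ∧ c ≠ r₂) (s := zerosCols A r₁ r₂)
    fun j hj j' hj' a ha => by
      obtain rfl | rfl : a = r₁ ∨ a = r₂ := by tauto
      all_goals simp_all
  have h₂ := card_union_add_card_inter
    (restrictCols A (fun c => c ≠ r₁ ∧ c ≠ r₂) (onesCols A r₁ r₂))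
    (restrictCols A (fun c => c ≠ r₁ ∧ c ≠ r₂) (zerosCols A r₁ r₂))
  have h₃ := P.card_eq_card_onesCols_add_card_zerosCols
  simp only [restrictCols, image_union] at h₀ h₁ h₂ ⊢
  omega

lemma card_le_card_restrictCols_add_three (hav : ¬ IsConfig Fcfg A) (hS : Simple A) :
    Fintype.card β ≤
      (restrictCols A (fun c => c ≠ r₁ ∧ c ≠ r₂) (onesCols A r₁ r₂ ∪ zerosCols A r₁ r₂)).card
        + 3 := by
  have := P.card_eq_card_restrictCols_add hS
  have := P.card_inter_le_one hav
  omega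

lemma exists_collision (hS : Simple A)
    (h : (restrictCols A (fun c => c ≠ r₁ ∧ c ≠ r₂)
      (onesCols A r₁ r₂ ∪ zerosCols A r₁ r₂)).card + 3 ≤ Fintype.card β) :
    ∃ U ∈ onesCols A r₁ r₂, ∃ V ∈ zerosCols A r₁ r₂, ∀ d, d ≠ r₁ → d ≠ r₂ → A d U = A d V := by
  have := P.card_eq_card_restrictCols_add hS
  obtain ⟨f, hf⟩ : (restrictCols A (fun c => c ≠ r₁ ∧ c ≠ r₂) (onesCols A r₁ r₂) ∩
      restrictCols A (fun c => c ≠ r₁ ∧ c ≠ r₂) (zerosCols A r₁ r₂)).Nonempty :=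
    card_pos.mp (by omega)
  simp only [restrictCols, mem_inter, mem_image] at hf
  obtain ⟨⟨U, hU, rfl⟩, V, hV, hVU⟩ := hf
  exact ⟨U, hU, V, hV, fun d h₁ h₂ => (congrFun hVU ⟨d, h₁, h₂⟩).symm⟩

variable (hav : ¬ IsConfig Fcfg A) {U V : β} (hU : U ∈ onesCols A r₁ r₂)
  (hV : V ∈ zerosCols A r₁ r₂) (hUV : ∀ d, d ≠ r₁ → d ≠ r₂ → A d U = A d V)
  (htwo : ∀ c, ∃ f ∈ restrictCols A (fun c => c ≠ r₁ ∧ c ≠ r₂)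
    (onesCols A r₁ r₂ ∪ zerosCols A r₁ r₂), ∃ g ∈ restrictCols A (fun c => c ≠ r₁ ∧ c ≠ r₂)
    (onesCols A r₁ r₂ ∪ zerosCols A r₁ r₂), f ≠ g ∧ f c = false ∧ g c = false)
include hav hU hV hUV htwo

lemma apply_zerosCols_eq_false {W : β} (hW : W ∈ zerosCols A r₁ r₂) (c : α) :
    A c W = false := by
  by_contra hc
  rw [Bool.not_eq_false] at hc
  have hc₁ : c ≠ r₁ := by rintro rfl; simp [(mem_zerosCols.mp hW).1] at hc
  have hc₂ : c ≠ r₂ := by rintro rfl; simp [(mem_zerosCols.mp hW).2] at hc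
  have hWV := P.eq_of_collision hav hU hV hUV hW hc
  suffices ∀ f ∈ restrictCols A (fun c => c ≠ r₁ ∧ c ≠ r₂)
      (onesCols A r₁ r₂ ∪ zerosCols A r₁ r₂), f ⟨c, hc₁, hc₂⟩ = false → f = fun _ => false by
    obtain ⟨f, hf, g, hg, hfg, hfc, hgc⟩ := htwo ⟨c, hc₁, hc₂⟩
    exact hfg ((this f hf hfc).trans (this g hg hgc).symm)
  intro f hf hfc
  obtain ⟨k, hk, rfl⟩ := mem_image.mp hf
  have hk₀ : k ∈ zerosCols A r₁ r₂ := (mem_union.mp hk).resolve_left fun hk₁ => by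
    have hck := mem_rowSupport.mp ((P.subset_of_mem_zerosCols hav hW hc).1 hk₁)
    simp [hck] at hfc
  funext d
  by_contra hd
  rw [Bool.not_eq_false] at hd
  have hkV := P.eq_of_collision hav hU hV hUV hk₀ hd
  simp [hkV, ← hWV, hc] at hfc

lemma exists_ne_onesCols_eq_false {c : α} (hc₁ : c ≠ r₁) (hc₂ : c ≠ r₂) :
    ∃ k₁ ∈ onesCols A r₁ r₂, ∃ k₂ ∈ onesCols A r₁ r₂,
      k₁ ≠ k₂ ∧ A c k₁ = false ∧ A c k₂ = false := by
  have hzero : ∀ W ∈ zerosCols A r₁ r₂, ∀ d, A d W = false := fun W hW =>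
    P.apply_zerosCols_eq_false hav hU hV hUV htwo hW
  have hrestr : ∀ f ∈ restrictCols A (fun c => c ≠ r₁ ∧ c ≠ r₂)
      (onesCols A r₁ r₂ ∪ zerosCols A r₁ r₂),
      ∃ k ∈ onesCols A r₁ r₂, (fun d : {d // d ≠ r₁ ∧ d ≠ r₂} => A d k) = f := by
    intro f hf
    obtain ⟨k, hk, rfl⟩ := mem_image.mp hf
    rcases mem_union.mp hk with hk | hk
    · exact ⟨k, hk, rfl⟩
    · exact ⟨U, hU, funext fun d => by simp [hUV d d.2.1 d.2.2, hzero V hV, hzero k hk]⟩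
  obtain ⟨f, hf, g, hg, hfg, hfc, hgc⟩ := htwo ⟨c, hc₁, hc₂⟩
  obtain ⟨k₁, hk₁, rfl⟩ := hrestr f hf
  obtain ⟨k₂, hk₂, rfl⟩ := hrestr g hg
  exact ⟨k₁, hk₁, k₂, hk₂, by rintro rfl; exact hfg rfl, hfc, hgc⟩

lemma apply_x_eq_false (c : α) (hc₁ : c ≠ r₁) : A c x = false := by
  by_cases hc₂ : c = r₂
  · exact hc₂ ▸ P.apply_x.2
  obtain ⟨k₁, hk₁, k₂, hk₂, hk, h₁, h₂⟩ :=
    P.exists_ne_onesCols_eq_false hav hU hV hUV htwo hc₁ hc₂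
  by_contra hx
  rw [Bool.not_eq_false] at hx
  exact hav (isConfig_Fcfg hc₂ hk h₁ h₂ hx (mem_onesCols.mp hk₁).2 (mem_onesCols.mp hk₂).2
    P.apply_x.2)

lemma apply_y_eq_false (c : α) (hc₂ : c ≠ r₂) : A c y = false := by
  by_cases hc₁ : c = r₁
  · exact hc₁ ▸ P.apply_y.2
  obtain ⟨k₁, hk₁, k₂, hk₂, hk, h₁, h₂⟩ :=
    P.exists_ne_onesCols_eq_false hav hU hV hUV htwo hc₁ hc₂
  by_contra hy
  rw [Bool.not_eq_false] at hy
  exact hav (isConfig_Fcfg hc₁ hk h₁ h₂ hy (mem_onesCols.mp hk₁).1 (mem_onesCols.mp hk₂).1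
    P.apply_y.2)

end Restricted

end IsSwapPair

end SwapPair

section Counting

variable {α β : Type*} [Fintype α] [DecidableEq α]

lemma card_subtype_ne (r : α) : Fintype.card {c // c ≠ r} = Fintype.card α - 1 := by
  simp [Fintype.card_subtype_compl]

lemma card_subtype_ne_and_ne {r₁ r₂ : α} (h : r₁ ≠ r₂) :
    Fintype.card {c // c ≠ r₁ ∧ c ≠ r₂} = Fintype.card α - 2 := by
  rw [Fintype.card_subtype, ← card_pair h, ← card_compl]
  congr 1
  ext c
  simp

variable [Fintype β] [DecidableEq β]

lemma card_le_card_restrictCols_add_one {A : α → β → Bool} (hS : Simple A) {r : α}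
    (h : ∀ c, rowSupport A c ⊆ rowSupport A r) :
    Fintype.card β ≤ (restrictCols A (· ≠ r) (rowSupport A r)).card + 1 := by
  have hcompl : (rowSupport A r)ᶜ.card ≤ 1 := by
    refine card_le_one.mpr fun j hj j' hj' => hS (funext fun c => ?_)
    have hzero : ∀ k ∉ rowSupport A r, A c k = false := fun k hk => by
      simpa using fun hck => hk (h c (mem_rowSupport.mpr hck))
    simp only [hzero j (mem_compl.mp hj), hzero j' (mem_compl.mp hj')]
  have := card_restrictCols hS (p := (· ≠ r)) (s := rowSupport A r) fun j hj j' hj' a ha => by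
    simp_all
  have := card_add_card_compl (rowSupport A r)
  omega

end Counting

theorem card_le_of_not_isConfig {α β : Type u} [Fintype α] [Fintype β] {A : α → β → Bool}
    (hS : Simple A) (hav : ¬ IsConfig Fcfg A) :
    Fintype.card β ≤ 3 * Fintype.card α / 2 + 1 := by
  classical
  obtain ⟨m, hm⟩ : ∃ m, Fintype.card α = m := ⟨_, rfl⟩
  induction m using Nat.strong_induction_on generalizing α β with
  | _ m IH =>
  rcases isEmpty_or_nonempty α with hα | hα
  · have : Fintype.card β ≤ 1 :=
      Fintype.card_le_one_iff.mpr fun j j' => hS (funext fun i => isEmptyElim i)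
    omega
  have hm₁ : 1 ≤ m := hm ▸ Fintype.card_pos
  obtain ⟨r, -, hr⟩ := exists_max_image univ (fun c => (rowSupport A c).card) univ_nonempty
  rcases subset_or_exists_isSwapPair hav fun c => hr c (mem_univ c) with hdom | ⟨r', x, y, P⟩
  · have h₁ := card_le_card_restrictCols_add_one hS hdom
    have hcard := card_subtype_ne r
    have h₂ := IH (m - 1) (by omega)
      (simple_colMat (restrictCols A (· ≠ r) (rowSupport A r)))
      (not_isConfig_colMat_restrictCols hav _) (by rw [hcard, hm])
    rw [Fintype.card_coe] at h₂
    omega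
  · have h₁ := P.card_le_card_restrictCols_add_three hav hS
    have hm₂ : 1 < m := hm ▸ Fintype.one_lt_card_iff.mpr ⟨r, r', P.ne⟩
    have hcard := card_subtype_ne_and_ne P.ne
    have h₂ := IH (m - 2) (by omega) (simple_colMat (restrictCols A (fun c => c ≠ r ∧ c ≠ r')
      (onesCols A r r' ∪ zerosCols A r r'))) (not_isConfig_colMat_restrictCols hav _)
      (by rw [hcard, hm])
    rw [Fintype.card_coe] at h₂
    omega

namespace IsSwapPair

lemma permEquivalent_extMat_succ_of_cols {α β : Type*} [Fintype α] [DecidableEq α] [Fintype β]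
    [DecidableEq β] {A : α → β → Bool} {r₁ r₂ : α} {x y : β} (P : IsSwapPair A r₁ r₂ x y)
    (hS : Simple A) {s : ℕ}
    (hα : Fintype.card α = 2 * (s + 1)) (hβ : Fintype.card β = 3 * (s + 1) + 1)
    (hx : ∀ c, c ≠ r₁ → A c x = false) (hy : ∀ c, c ≠ r₂ → A c y = false)
    (hzero : ∀ W ∈ zerosCols A r₁ r₂, ∀ c, A c W = false)
    (e : {c // c ≠ r₁ ∧ c ≠ r₂} ≃ Fin s × Fin 2)
    (hones : ∀ j ∈ onesCols A r₁ r₂,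
      ∃ κ, ∀ c : {c // c ≠ r₁ ∧ c ≠ r₂}, A c j = extMat s (e c) κ) :
    PermEquivalent A (extMat (s + 1)) := by
  have hbij : Bijective (pairLabel r₁ r₂ e) :=
    (Fintype.bijective_iff_injective_and_card _).mpr
      ⟨pairLabel_injective e.injective, by simp [hα, mul_comm]⟩
  refine permEquivalent_of_forall_exists hS (Equiv.ofBijective _ hbij) (by simp [hβ]; ring)
    fun j => ?_
  cases h₁ : A r₁ j <;> cases h₂ : A r₂ j
  · exact ⟨Sum.inl 0, fun i => by rw [hzero j (by simp [h₁, h₂]) i, extMat_inl_zero]⟩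
  · obtain rfl : j = y := by
      have hj : j ∈ rowSupport A r₂ \ rowSupport A r₁ := by simp [h₁, h₂]
      simpa [P.sdiff_right] using hj
    refine ⟨Sum.inr (0, 1),
      forall_pairLabel e (Q := fun i p => A i j = extMat (s + 1) p _) ?_ ?_ fun c => ?_⟩
    · simp [h₁, extMat]
    · simp [h₂, extMat]
    · simp [hy c c.2.2, extMat, Fin.succ_ne_zero]
  · obtain rfl : j = x := by
      have hj : j ∈ rowSupport A r₁ \ rowSupport A r₂ := by simp [h₁, h₂]
      simpa [P.sdiff_left] using hj
    refine ⟨Sum.inr (0, 0),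
      forall_pairLabel e (Q := fun i p => A i j = extMat (s + 1) p _) ?_ ?_ fun c => ?_⟩
    · simp [h₁, extMat]
    · simp [h₂, extMat]
    · simp [hx c c.2.1, extMat, Fin.succ_ne_zero]
  · obtain ⟨κ, hκ⟩ := hones j (by simp [h₁, h₂])
    refine ⟨Sum.map Fin.succ (Prod.map Fin.succ id) κ,
      forall_pairLabel e (Q := fun i p => A i j = extMat (s + 1) p _) ?_ ?_ fun c => ?_⟩
    · rw [h₁, extMat_zero_map_succ]
    · rw [h₂, extMat_zero_map_succ]
    · rw [hκ c, extMat_succ_map_succ]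

lemma permEquivalent_extMat_succ {α β : Type u} [Fintype α] [DecidableEq α] [Fintype β]
    [DecidableEq β] {A : α → β → Bool} {r₁ r₂ : α} {x y : β} (P : IsSwapPair A r₁ r₂ x y)
    (hS : Simple A) (hav : ¬ IsConfig Fcfg A) {s : ℕ}
    (hα : Fintype.card α = 2 * (s + 1)) (hβ : Fintype.card β = 3 * (s + 1) + 1)
    (IH : ∀ J : Finset ({c // c ≠ r₁ ∧ c ≠ r₂} → Bool),
      Fintype.card {c // c ≠ r₁ ∧ c ≠ r₂} = 2 * s → J.card = 3 * s + 1 →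
      ¬ IsConfig Fcfg (colMat J) → PermEquivalent (colMat J) (extMat s)) :
    PermEquivalent A (extMat (s + 1)) := by
  have hrest : Fintype.card {c // c ≠ r₁ ∧ c ≠ r₂} = 2 * s := by
    rw [card_subtype_ne_and_ne P.ne]
    omega
  have hJ := card_le_of_not_isConfig (simple_colMat (restrictCols A (fun c => c ≠ r₁ ∧ c ≠ r₂)
    (onesCols A r₁ r₂ ∪ zerosCols A r₁ r₂))) (not_isConfig_colMat_restrictCols hav _)
  rw [Fintype.card_coe, hrest] at hJ
  have hβJ := P.card_le_card_restrictCols_add_three hav hS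
  obtain ⟨U, hU, V, hV, hUV⟩ := P.exists_collision hS (by omega)
  set J := restrictCols A (fun c => c ≠ r₁ ∧ c ≠ r₂) (onesCols A r₁ r₂ ∪ zerosCols A r₁ r₂)
  obtain ⟨e, f, hef⟩ := IH J hrest (by omega) (not_isConfig_colMat_restrictCols hav _)
  have htwo : ∀ c, ∃ g ∈ J, ∃ g' ∈ J, g ≠ g' ∧ g c = false ∧ g' c = false := fun c => by
    obtain ⟨g, g', hgg', hg, hg'⟩ := PermEquivalent.exists_two_zeros_of_extMat ⟨e, f, hef⟩ c
    exact ⟨g, g.2, g', g'.2, Subtype.coe_injective.ne hgg', hg, hg'⟩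
  exact P.permEquivalent_extMat_succ_of_cols hS hα hβ
    (P.apply_x_eq_false hav hU hV hUV htwo) (P.apply_y_eq_false hav hU hV hUV htwo)
    (fun W hW => P.apply_zerosCols_eq_false hav hU hV hUV htwo hW) e
    fun j hj => ⟨_, fun c => hef c ⟨fun d => A d j, mem_image_of_mem _ (mem_union_left _ hj)⟩⟩

end IsSwapPair

theorem permEquivalent_extMat {α β : Type u} [Fintype α] [Fintype β] {A : α → β → Bool}
    (t : ℕ) (hα : Fintype.card α = 2 * t) (hβ : Fintype.card β = 3 * t + 1) (hS : Simple A)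
    (hav : ¬ IsConfig Fcfg A) : PermEquivalent A (extMat t) := by
  classical
  induction t generalizing α β with
  | zero =>
    have : IsEmpty α := Fintype.card_eq_zero_iff.mp hα
    exact ⟨Equiv.equivOfIsEmpty _ _, Fintype.equivOfCardEq (by simp [hβ]), isEmptyElim⟩
  | succ s IH =>
    have : Nonempty α := Fintype.card_pos_iff.mp (by omega)
    obtain ⟨r₁, -, hr⟩ := exists_max_image univ (fun c => (rowSupport A c).card) univ_nonempty
    obtain ⟨r₂, x, y, P⟩ :=
      (subset_or_exists_isSwapPair hav fun c => hr c (mem_univ c)).resolve_left fun hdom => by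
        have h₁ := card_le_card_restrictCols_add_one hS hdom
        have h₂ := card_le_of_not_isConfig
          (simple_colMat (restrictCols A (· ≠ r₁) (rowSupport A r₁)))
          (not_isConfig_colMat_restrictCols hav _)
        rw [Fintype.card_coe, card_subtype_ne] at h₂
        omega
    exact P.permEquivalent_extMat_succ hS hav hα hβ fun J hrest hJ hJav =>
      IH hrest (by rw [Fintype.card_coe, hJ]) (simple_colMat J) hJav

/-- For even `m = 2t`, the extremal simple matrix avoiding `F = [[0,0,1],[1,1,0]]` with
`⌊3m/2⌋ + 1 = 3t + 1` columns is unique up to row and column permutations: it is the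
block staircase matrix all of whose `t` diagonal blocks are `I₂`. -/
theorem stmt4 (t : ℕ) (A : Fin (2 * t) → Fin (3 * t + 1) → Bool)
    (hS : Simple A) (hav : ¬ IsConfig Fcfg A) :
    ∃ (e : Fin (2 * t) ≃ (Fin t × Fin 2))
      (f : Fin (3 * t + 1) ≃ (Fin (t + 1) ⊕ Fin t × Fin 2)),
      ∀ i j, A i j = extMat t (e i) (f j) :=
  permEquivalent_extMat t (by simp) (by simp) hS hav
end

section
/- forb(m, F_2) = ⌊m²/4⌋ + m + 1, where F_2 is the 3×4 matrix with rows (1,1,0,0), (1,0,1,0), (0,1,0,1). -/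
/-- `F₂`, the 3×4 matrix with rows (1,1,0,0), (1,0,1,0), (0,1,0,1). -/
def F2 : Fin 3 → Fin 4 → Bool :=
  ![![true, true, false, false], ![true, false, true, false], ![false, true, false, true]]

/-!
Read the columns of a simple matrix as a family `𝒜` of subsets of the rows. For a row `r`, the
sets `S ∌ r` with both `S` and `insert r S` in `𝒜` form a chain when `F₂` is absent, so there is
at most one more of them than there are elements separated by the chain. Two rows separating
each other have disjoint separated sets, and double counting then yields a row `r` with at most
`m / 2 + 1` such sets. Deleting `r` loses exactly these columns, and induction on `m` gives the
upper bound. It is attained by splitting the rows into blocks of sizes `⌊m/2⌋` and `⌈m/2⌉` and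
taking as columns all unions of an initial segment of each block: rows within a block are
nested, whereas any two rows of `F₂` are incomparable and two of its three rows share a block.
-/

open Finset

section SetFamily

variable {α : Type*}

/-- The configuration `F2` in the family of column supports of a matrix, on rows `a, b, c`
(the four patterns force `a, b, c` to be distinct). -/
def HasF2 (𝒜 : Finset (Finset α)) : Prop :=
  ∃ a b c : α, (∃ S ∈ 𝒜, a ∈ S ∧ b ∈ S ∧ c ∉ S) ∧ (∃ S ∈ 𝒜, a ∈ S ∧ b ∉ S ∧ c ∈ S) ∧
    (∃ S ∈ 𝒜, a ∉ S ∧ b ∈ S ∧ c ∉ S) ∧ (∃ S ∈ 𝒜, a ∉ S ∧ b ∉ S ∧ c ∈ S)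

def separated (𝒞 : Finset (Finset α)) [DecidableEq α] : Finset α :=
  𝒞.biUnion fun S => 𝒞.biUnion fun T => S \ T

variable [DecidableEq α] {𝒜 𝒞 : Finset (Finset α)} {V : Finset α}

lemma mem_separated {x : α} : x ∈ separated 𝒞 ↔ ∃ S ∈ 𝒞, ∃ T ∈ 𝒞, x ∈ S ∧ x ∉ T := by
  simp [separated]

lemma separated_subset (h : ∀ S ∈ 𝒞, S ⊆ V) : separated 𝒞 ⊆ V :=
  biUnion_subset.2 fun S hS => biUnion_subset.2 fun _ _ => sdiff_subset.trans (h S hS)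

lemma IsChain.card_le_card_separated_add_one (h𝒞 : IsChain (· ⊆ ·) (𝒞 : Set (Finset α))) :
    #𝒞 ≤ #(separated 𝒞) + 1 := by
  have hinj : Set.InjOn (fun S => #(S ∩ separated 𝒞)) 𝒞 := by
    intro S hS T hT hST
    by_contra hne
    wlog hsub : S ⊆ T generalizing S T
    · exact this hT hS hST.symm (Ne.symm hne) ((h𝒞.total hS hT).resolve_left hsub)
    obtain ⟨x, hxT, hxS⟩ := exists_of_ssubset (hsub.ssubset_of_ne hne)
    have hx : x ∈ separated 𝒞 := mem_separated.2 ⟨T, hT, S, hS, hxT, hxS⟩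
    have hlt : S ∩ separated 𝒞 ⊂ T ∩ separated 𝒞 :=
      (inter_subset_inter_right hsub).ssubset_of_ne
        fun he => hxS (mem_inter.1 (he ▸ mem_inter.2 ⟨hxT, hx⟩)).1
    exact (card_lt_card hlt).ne hST
  simpa using card_le_card_of_injOn _
    (fun S _ => mem_range.2 (Nat.lt_succ_of_le (card_le_card inter_subset_right))) hinj

lemma IsChain.exists_pair_separating (h𝒞 : IsChain (· ⊆ ·) (𝒞 : Set (Finset α))) {x y : α}
    (hx : x ∈ separated 𝒞) (hy : y ∈ separated 𝒞) :
    ∃ S ∈ 𝒞, ∃ T ∈ 𝒞, x ∈ S ∧ y ∈ S ∧ x ∉ T ∧ y ∉ T := by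
  obtain ⟨Sx, hSx, Tx, hTx, hxS, hxT⟩ := mem_separated.1 hx
  obtain ⟨Sy, hSy, Ty, hTy, hyS, hyT⟩ := mem_separated.1 hy
  obtain ⟨S, hS, hxS, hyS⟩ : ∃ S ∈ 𝒞, x ∈ S ∧ y ∈ S :=
    (h𝒞.total hSx hSy).elim (fun h => ⟨Sy, hSy, h hxS, hyS⟩) (fun h => ⟨Sx, hSx, hxS, h hyS⟩)
  obtain ⟨T, hT, hxT, hyT⟩ : ∃ T ∈ 𝒞, x ∉ T ∧ y ∉ T :=
    (h𝒞.total hTx hTy).elim (fun h => ⟨Tx, hTx, hxT, fun hy => hyT (h hy)⟩)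
      (fun h => ⟨Ty, hTy, fun hx => hxT (h hx), hyT⟩)
  exact ⟨S, hS, T, hT, hxS, hyS, hxT, hyT⟩

lemma exists_mutual_of_card_lt_two_mul {N : α → Finset α} (hV : V.Nonempty)
    (hN : ∀ r ∈ V, N r ⊆ V) (hlt : ∀ r ∈ V, #V < 2 * #(N r)) :
    ∃ r ∈ V, ∃ s ∈ N r, r ∈ N s := by
  by_contra! hno
  have hcount : ∀ r ∈ V, #(N r) = ∑ s ∈ V, if s ∈ N r then 1 else 0 := fun r hr => by
    rw [sum_boole, filter_mem_eq_inter, inter_eq_right.2 (hN r hr), Nat.cast_id]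
  have hupper : 2 * ∑ r ∈ V, #(N r) ≤ #V * #V :=
    calc 2 * ∑ r ∈ V, #(N r)
        = ∑ r ∈ V, ∑ s ∈ V, ((if s ∈ N r then 1 else 0) + if r ∈ N s then 1 else 0) := by
          simp only [sum_add_distrib]
          rw [sum_comm (f := fun r s => if r ∈ N s then 1 else 0), two_mul,
            ← sum_congr rfl hcount]
      _ ≤ ∑ r ∈ V, ∑ s ∈ V, 1 := by
          refine sum_le_sum fun r hr => sum_le_sum fun s hs => ?_
          by_cases hsr : s ∈ N r
          · simp [hsr, hno r hr s hsr]
          · split_ifs <;> simp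
      _ = #V * #V := by simp
  have hlower : #V * #V < 2 * ∑ r ∈ V, #(N r) := by
    rw [mul_sum]
    simpa using sum_lt_sum_of_nonempty hV hlt
  omega

/-- In matrix terms: the columns with `0` in row `r` that also occur with `1` in row `r`. -/
def pairedSubfamily (r : α) (𝒜 : Finset (Finset α)) : Finset (Finset α) :=
  memberSubfamily r 𝒜 ∩ nonMemberSubfamily r 𝒜

lemma mem_pairedSubfamily {r : α} {S : Finset α} :
    S ∈ pairedSubfamily r 𝒜 ↔ S ∈ 𝒜 ∧ insert r S ∈ 𝒜 ∧ r ∉ S := by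
  simp only [pairedSubfamily, mem_inter, mem_memberSubfamily, mem_nonMemberSubfamily]
  tauto

lemma card_eq_card_image_erase_add_card_pairedSubfamily (r : α) (𝒜 : Finset (Finset α)) :
    #𝒜 = #(𝒜.image (erase · r)) + #(pairedSubfamily r 𝒜) := by
  rw [← memberSubfamily_union_nonMemberSubfamily, pairedSubfamily, card_union_add_card_inter,
    card_memberSubfamily_add_card_nonMemberSubfamily]

lemma HasF2.of_image_erase {r : α} (h : HasF2 (𝒜.image (erase · r))) : HasF2 𝒜 := by
  obtain ⟨a, b, c, ⟨_, h₁, p₁⟩, ⟨_, h₂, p₂⟩, ⟨_, h₃, p₃⟩, ⟨_, h₄, p₄⟩⟩ := h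
  obtain ⟨T₁, hT₁, rfl⟩ := mem_image.1 h₁
  obtain ⟨T₂, hT₂, rfl⟩ := mem_image.1 h₂
  obtain ⟨T₃, hT₃, rfl⟩ := mem_image.1 h₃
  obtain ⟨T₄, hT₄, rfl⟩ := mem_image.1 h₄
  have ha : a ≠ r := ne_of_mem_erase p₁.1
  have hb : b ≠ r := ne_of_mem_erase p₁.2.1
  have hc : c ≠ r := ne_of_mem_erase p₂.2.2
  simp only [mem_erase, ne_eq, ha, hb, hc, not_false_eq_true, true_and] at p₁ p₂ p₃ p₄
  exact ⟨a, b, c, ⟨T₁, hT₁, p₁⟩, ⟨T₂, hT₂, p₂⟩, ⟨T₃, hT₃, p₃⟩, ⟨T₄, hT₄, p₄⟩⟩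

lemma ne_of_mem_separated_pairedSubfamily {r x : α}
    (hx : x ∈ separated (pairedSubfamily r 𝒜)) : x ≠ r := by
  obtain ⟨S, hS, -, -, hxS, -⟩ := mem_separated.1 hx
  exact ne_of_mem_of_not_mem hxS (mem_pairedSubfamily.1 hS).2.2

lemma isChain_pairedSubfamily (h𝒜 : ¬ HasF2 𝒜) (r : α) :
    IsChain (· ⊆ ·) (pairedSubfamily r 𝒜 : Set (Finset α)) := by
  intro S hS T hT _
  by_contra! hST
  obtain ⟨b, hbS, hbT⟩ := not_subset.1 hST.1
  obtain ⟨c, hcT, hcS⟩ := not_subset.1 hST.2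
  obtain ⟨hS, hrS', hrS⟩ := mem_pairedSubfamily.1 hS
  obtain ⟨hT, hrT', hrT⟩ := mem_pairedSubfamily.1 hT
  have hbr : b ≠ r := ne_of_mem_of_not_mem hbS hrS
  have hcr : c ≠ r := ne_of_mem_of_not_mem hcT hrT
  exact h𝒜 ⟨r, b, c, ⟨insert r S, hrS', by simp [hbS, hcS, hcr]⟩,
    ⟨insert r T, hrT', by simp [hbT, hcT, hbr]⟩, ⟨S, hS, hrS, hbS, hcS⟩, ⟨T, hT, hrT, hbT, hcT⟩⟩

lemma disjoint_separated_pairedSubfamily (h𝒜 : ¬ HasF2 𝒜) {r s : α}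
    (hs : s ∈ separated (pairedSubfamily r 𝒜)) (hr : r ∈ separated (pairedSubfamily s 𝒜)) :
    Disjoint (separated (pairedSubfamily r 𝒜)) (separated (pairedSubfamily s 𝒜)) := by
  rw [disjoint_left]
  intro a har has
  obtain ⟨X, hX, X', hX', hsX, haX, hsX', haX'⟩ :=
    (isChain_pairedSubfamily h𝒜 r).exists_pair_separating hs har
  obtain ⟨Y, hY, Y', hY', hrY, haY, hrY', haY'⟩ :=
    (isChain_pairedSubfamily h𝒜 s).exists_pair_separating hr has
  rw [mem_pairedSubfamily] at hX hX' hY hY'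
  have hsr := ne_of_mem_separated_pairedSubfamily hs
  have har := ne_of_mem_separated_pairedSubfamily har
  have has := ne_of_mem_separated_pairedSubfamily has
  exact h𝒜 ⟨a, r, s, ⟨Y, hY.1, haY, hrY, hY.2.2⟩, ⟨X, hX.1, haX, hX.2.2, hsX⟩,
    ⟨insert r X', hX'.2.1, by simp [*]⟩, ⟨insert s Y', hY'.2.1, by simp [*, Ne.symm hsr]⟩⟩

lemma exists_card_pairedSubfamily_le (h𝒜 : ¬ HasF2 𝒜) (hsub : ∀ S ∈ 𝒜, S ⊆ V)
    (hV : V.Nonempty) :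
    ∃ r ∈ V, #(pairedSubfamily r 𝒜) ≤ #V / 2 + 1 := by
  by_contra! hbig
  have hchain r := (isChain_pairedSubfamily h𝒜 r).card_le_card_separated_add_one
  have hsepV r : separated (pairedSubfamily r 𝒜) ⊆ V :=
    separated_subset fun S hS => hsub S (mem_pairedSubfamily.1 hS).1
  obtain ⟨r, hr, s, hs, hrs⟩ := exists_mutual_of_card_lt_two_mul hV (fun r _ => hsepV r)
    fun r hr => by have := hbig r hr; have := hchain r; omega
  have hsum := card_union_of_disjoint (disjoint_separated_pairedSubfamily h𝒜 hs hrs) ▸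
    card_le_card (union_subset (hsepV r) (hsepV s))
  have := hbig r hr
  have := hbig s (hsepV r hs)
  have := hchain r
  have := hchain s
  omega

lemma succ_sq_div_four (k : ℕ) : (k + 1) ^ 2 / 4 = k ^ 2 / 4 + (k + 1) / 2 := by
  obtain ⟨q, rfl | rfl⟩ := Nat.even_or_odd' k <;> ring_nf <;> omega

theorem card_le_of_not_hasF2 (V : Finset α) (𝒜 : Finset (Finset α)) (hsub : ∀ S ∈ 𝒜, S ⊆ V)
    (h𝒜 : ¬ HasF2 𝒜) : #𝒜 ≤ #V ^ 2 / 4 + #V + 1 := by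
  induction V using Finset.strongInduction generalizing 𝒜 with
  | H V ih =>
    rcases V.eq_empty_or_nonempty with rfl | hV
    · simpa using card_le_card fun S hS => mem_powerset.2 (hsub S hS)
    obtain ⟨r, hr, hpaired⟩ := exists_card_pairedSubfamily_le h𝒜 hsub hV
    have herase := ih (V.erase r) (erase_ssubset hr) (𝒜.image (erase · r))
      (forall_mem_image.2 fun T hT => erase_subset_erase r (hsub T hT))
      (fun h => h𝒜 h.of_image_erase)
    have hcard := card_eq_card_image_erase_add_card_pairedSubfamily r 𝒜
    rw [← card_erase_add_one hr] at hpaired ⊢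
    rw [succ_sq_div_four]
    omega

end SetFamily

section Matrix

variable {α β γ δ : Type*}

lemma isConfig_iff_of_simple {F : α → β → Bool} {A : γ → δ → Bool} (hF : Simple F) :
    IsConfig F A ↔ ∃ r : α → γ, r.Injective ∧ ∀ j, ∃ k, ∀ i, F i j = A (r i) k := by
  refine ⟨fun ⟨r, c, h⟩ => ⟨r, r.injective, fun j => ⟨c j, fun i => h i j⟩⟩,
    fun ⟨r, hr, h⟩ => ?_⟩
  choose c hc using h
  refine ⟨⟨r, hr⟩, ⟨c, fun j j' hjj' => hF ?_⟩, fun i j => hc j i⟩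
  funext i
  simp only [hc j i, hc j' i, hjj']

lemma not_isConfig_F2_of_two_chains {A : γ → δ → Bool} (block : γ → Bool)
    (hchain : ∀ x y, block x = block y → (∀ k, A x k → A y k) ∨ (∀ k, A y k → A x k)) :
    ¬ IsConfig F2 A := by
  rintro ⟨r, c, h⟩
  obtain ⟨i, i', hne, hblock⟩ := Fintype.exists_ne_map_eq_of_card_lt (block ∘ r) (by simp)
  have hF2 : ∀ i i' : Fin 3, i ≠ i' → ∃ j, F2 i j = true ∧ F2 i' j = false := by decide
  obtain ⟨j, hij, hi'j⟩ := hF2 i i' hne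
  obtain ⟨j', hi'j', hij'⟩ := hF2 i' i hne.symm
  rw [h] at hij hi'j hij' hi'j'
  rcases hchain _ _ hblock with hle | hle
  · simp [hle _ hij] at hi'j
  · simp [hle _ hi'j'] at hij'

lemma Simple.comp {A : γ → δ → Bool} (hA : Simple A) (er : α ≃ γ) (ec : β ↪ δ) :
    Simple fun i j => A (er i) (ec j) := by
  intro j j' h
  refine ec.injective (hA (funext fun i => ?_))
  simpa using congrFun h (er.symm i)

lemma IsConfig.of_comp {F : α → β → Bool} {A : γ → δ → Bool} {α' β' : Type*} (er : α' ↪ γ)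
    (ec : β' ↪ δ) (h : IsConfig F fun i j => A (er i) (ec j)) : IsConfig F A :=
  let ⟨r, c, hrc⟩ := h
  ⟨r.trans er, c.trans ec, hrc⟩

def columns [Fintype γ] [DecidableEq γ] [Fintype δ] (A : γ → δ → Bool) : Finset (Finset γ) :=
  univ.image fun j => univ.filter (A · j)

variable [Fintype γ] [DecidableEq γ] [Fintype δ] {A : γ → δ → Bool}

lemma card_columns (hA : Simple A) : #(columns A) = Fintype.card δ := by
  refine card_image_of_injective _ fun j j' h => hA (funext fun i => ?_)
  simpa using congrArg (i ∈ ·) h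

lemma HasF2.isConfig (h : HasF2 (columns A)) : IsConfig F2 A := by
  simp only [HasF2, columns, exists_mem_image, mem_univ, true_and, mem_filter,
    Bool.not_eq_true] at h
  obtain ⟨a, b, c, ⟨j₁, p₁⟩, ⟨j₂, p₂⟩, ⟨j₃, p₃⟩, ⟨j₄, p₄⟩⟩ := h
  have hab : a ≠ b := ne_of_apply_ne (A · j₂) (by simp [p₂])
  have hac : a ≠ c := ne_of_apply_ne (A · j₁) (by simp [p₁])
  have hbc : b ≠ c := ne_of_apply_ne (A · j₁) (by simp [p₁])
  refine (isConfig_iff_of_simple (by unfold Simple; decide)).2 ⟨![a, b, c],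
    fun i i' => by fin_cases i <;> fin_cases i' <;> simp [*, Ne.symm],
    fun j => ⟨![j₁, j₂, j₃, j₄] j, fun i => ?_⟩⟩
  fin_cases j <;> fin_cases i <;> simp [F2, *]

end Matrix

def twoChainMatrix (p q : ℕ) : Fin p ⊕ Fin q → Fin (p + 1) × Fin (q + 1) → Bool
  | .inl x, k => decide ((x : ℕ) < k.1)
  | .inr y, k => decide ((y : ℕ) < k.2)

lemma Fin.eq_of_forall_val_lt_iff {p : ℕ} {d d' : Fin (p + 1)}
    (h : ∀ x : Fin p, (x : ℕ) < d ↔ (x : ℕ) < d') : d = d' := by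
  refine Fin.ext (le_antisymm ?_ ?_) <;> by_contra! hlt
  · exact lt_irrefl _ ((h ⟨d', by omega⟩).1 hlt)
  · exact lt_irrefl _ ((h ⟨d, by omega⟩).2 hlt)

lemma simple_twoChainMatrix (p q : ℕ) : Simple (twoChainMatrix p q) := by
  rintro ⟨d, e⟩ ⟨d', e'⟩ h
  refine Prod.ext (Fin.eq_of_forall_val_lt_iff fun x => ?_)
    (Fin.eq_of_forall_val_lt_iff fun y => ?_)
  · simpa [twoChainMatrix] using congrFun h (.inl x)
  · simpa [twoChainMatrix] using congrFun h (.inr y)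

lemma not_isConfig_F2_twoChainMatrix (p q : ℕ) : ¬ IsConfig F2 (twoChainMatrix p q) := by
  refine not_isConfig_F2_of_two_chains Sum.isLeft ?_
  rintro (x | y) (x' | y') h <;> simp only [Sum.isLeft_inl, Sum.isLeft_inr, reduceCtorEq] at h
  · rcases le_total x x' with hle | hle <;> [right; left] <;>
      simp only [twoChainMatrix, decide_eq_true_eq] <;> intro k hk <;> omega
  · rcases le_total y y' with hle | hle <;> [right; left] <;>
      simp only [twoChainMatrix, decide_eq_true_eq] <;> intro k hk <;> omega

lemma sq_div_four_add_add_one (m : ℕ) : m ^ 2 / 4 + m + 1 = (m / 2 + 1) * (m - m / 2 + 1) := by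
  obtain ⟨q, rfl | rfl⟩ := Nat.even_or_odd' m
  · rw [Nat.mul_div_cancel_left q two_pos, show 2 * q - q = q by omega]; ring_nf; omega
  · rw [show (2 * q + 1) / 2 = q by omega, show 2 * q + 1 - q = q + 1 by omega]; ring_nf; omega

/-- `forb(m, F₂) = ⌊m²/4⌋ + m + 1`. -/
theorem stmt5 (m : ℕ) :
    IsGreatest {n : ℕ | ∃ A : Fin m → Fin n → Bool, Simple A ∧ ¬ IsConfig F2 A}
      (m ^ 2 / 4 + m + 1) := by
  refine ⟨?_, fun n ⟨A, hA, hF2⟩ => ?_⟩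
  · have hrows : m / 2 + (m - m / 2) = m := by omega
    let er : Fin m ≃ Fin (m / 2) ⊕ Fin (m - m / 2) :=
      (finCongr hrows.symm).trans finSumFinEquiv.symm
    let ec : Fin (m ^ 2 / 4 + m + 1) ≃ Fin (m / 2 + 1) × Fin (m - m / 2 + 1) :=
      (finCongr (sq_div_four_add_add_one m)).trans finProdFinEquiv.symm
    exact ⟨_, (simple_twoChainMatrix _ _).comp er ec.toEmbedding,
      fun h => not_isConfig_F2_twoChainMatrix _ _ (h.of_comp er.toEmbedding ec.toEmbedding)⟩
  · simpa [card_columns hA] using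
      card_le_of_not_hasF2 univ (columns A) (fun _ _ => subset_univ _) fun h => hF2 h.isConfig
end

section
/- Let F_2 be the 3×4 matrix with rows (1,1,0,0),(1,0,1,0),(0,1,0,1). If A is a simple m-rowed matrix avoiding F_2 with at least ⌊m²/4⌋ + m + 1 − m/6 + 1 columns, then A is a configuration in [0_k T_k] × [0_{m−k} T_{m−k}] for some k with both k and m−k at least m/2 − √(m/6). -/
/-- The product `[0_k T_k] × [0_l T_l]`. -/
def triProd (k l : ℕ) : (Fin k ⊕ Fin l) → (Fin (k + 1) × Fin (l + 1)) → Bool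
  | Sum.inl i, (c, _) => decide ((i : ℕ) < (c : ℕ))
  | Sum.inr i, (_, d) => decide ((i : ℕ) < (d : ℕ))

open Finset

section General

variable {α β γ δ : Type*}

lemma IsChain.exists_forall_le [Preorder α] {s : Finset α} (hs : IsChain (· ≤ ·) (s : Set α))
    (hne : s.Nonempty) : ∃ a ∈ s, ∀ b ∈ s, a ≤ b := by
  obtain ⟨a, ha, hmin⟩ := s.exists_minimal hne
  exact ⟨a, ha, fun b hb => (hs.total ha hb).elim id fun hba => hmin hb hba⟩

lemma isAntichain_of_incompRel {r : α → α → Prop} {x y z : α} (hxy : IncompRel r x y)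
    (hxz : IncompRel r x z) (hyz : IncompRel r y z) : IsAntichain r ({x, y, z} : Set α) := by
  simp only [isAntichain_insert, Set.mem_insert_iff, Set.mem_singleton_iff]
  refine ⟨⟨IsAntichain.singleton, fun b hb _ => hb ▸ hyz⟩, fun b hb _ => ?_⟩
  rcases hb with rfl | rfl
  exacts [hxy, hxz]

lemma Finset.card_inter_le_one_of_isAntichain_of_isChain [DecidableEq α] {r : α → α → Prop}
    {T J : Finset α} (hT : IsAntichain r (T : Set α)) (hJ : IsChain r (J : Set α)) :
    #(T ∩ J) ≤ 1 := by
  rw [card_le_one_iff_subsingleton, coe_inter]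
  exact inter_subsingleton_of_isAntichain_of_isChain hT hJ

variable {F : α → β → Bool} {A : γ → δ → Bool} {r : α → γ} {c : β → δ}

lemma IsConfig.of_simple (hF : Simple F) (hr : Function.Injective r)
    (h : ∀ i j, F i j = A (r i) (c j)) : IsConfig F A :=
  ⟨⟨r, hr⟩, ⟨c, fun j j' hjj' => hF (funext fun i => by simp only [h, hjj'])⟩, h⟩

lemma injective_of_injective_of_forall_eq (hF : Function.Injective F)
    (h : ∀ i j, F i j = A (r i) (c j)) : Function.Injective r :=
  fun i i' hii' => hF (funext fun j => by rw [h, h, hii'])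

lemma IsConfig.card_le [Fintype β] [Fintype δ] (h : IsConfig F A) :
    Fintype.card β ≤ Fintype.card δ :=
  let ⟨_, c, _⟩ := h
  Fintype.card_le_of_embedding c

end General

section WidthTwo

variable {β : Type*} [Preorder β] [DecidableEq β]

lemma exists_isChain_isChain_sdiff_of_erase {s P Q : Finset β} {a : β} (ha : a ∈ s)
    (hPQ : P ∪ Q = s.erase a)
    (hP : IsChain (· ≤ ·) (P : Set β)) (hQ : IsChain (· ≤ ·) (Q : Set β))
    (hcross : ∀ p ∈ P, ∀ q ∈ Q, ¬ q ≤ a → p ≤ q ∨ q ≤ p) :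
    ∃ C ⊆ s, IsChain (· ≤ ·) (C : Set β) ∧ IsChain (· ≤ ·) ((s \ C : Finset β) : Set β) := by
  classical
  refine ⟨insert a {q ∈ Q | q ≤ a}, insert_subset ha fun q hq =>
    mem_of_mem_erase (hPQ ▸ mem_union_right _ (mem_filter.1 hq).1), ?_, ?_⟩
  · rw [coe_insert]
    exact (hQ.mono (coe_subset.2 (filter_subset _ _))).insert fun q hq _ => .inr (mem_filter.1 hq).2
  · have hsub : s \ insert a {q ∈ Q | q ≤ a} ⊆ P ∪ {q ∈ Q | ¬ q ≤ a} := by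
      intro x hx
      rw [mem_sdiff, mem_insert, mem_filter] at hx
      rw [mem_union, mem_filter]
      rcases mem_union.1 (hPQ ▸ mem_erase.2 ⟨fun h => hx.2 (.inl h), hx.1⟩) with h | h
      exacts [.inl h, .inr ⟨h, fun hle => hx.2 (.inr ⟨h, hle⟩)⟩]
    refine IsChain.mono (coe_subset.2 hsub) ?_
    rw [coe_union, isChain_union]
    exact ⟨hP, hQ.mono (coe_subset.2 (filter_subset _ _)), fun p hp q hq _ =>
      hcross p hp q (mem_filter.1 hq).1 (mem_filter.1 hq).2⟩

/-- Dilworth's theorem for width two. Remove a maximal element `a` and split the two chains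
covering the rest at `a`; elements not below `a` are incomparable to `a`, hence pairwise
comparable, and one of the two ways of regluing the pieces works. -/
theorem exists_isChain_isChain_sdiff (s : Finset β)
    (hs : ∀ x ∈ s, ∀ y ∈ s, ∀ z ∈ s, IncompRel (· ≤ ·) x y → IncompRel (· ≤ ·) x z →
      IncompRel (· ≤ ·) y z → False) :
    ∃ C ⊆ s, IsChain (· ≤ ·) (C : Set β) ∧ IsChain (· ≤ ·) ((s \ C : Finset β) : Set β) := by
  induction s using Finset.strongInduction with
  | H s ih =>
  rcases s.eq_empty_or_nonempty with rfl | hne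
  · exact ⟨∅, by simp⟩
  obtain ⟨a, has, hmax⟩ := s.exists_maximal hne
  obtain ⟨C, hC, hCc, hDc⟩ := ih (s.erase a) (erase_ssubset has) fun x hx y hy z hz =>
    hs x (mem_of_mem_erase hx) y (mem_of_mem_erase hy) z (mem_of_mem_erase hz)
  set D := s.erase a \ C
  have hCD : C ∪ D = s.erase a := union_sdiff_of_subset hC
  have hhigh : ∀ x ∈ s.erase a, ∀ y ∈ s.erase a, ¬ x ≤ a → ¬ y ≤ a → x ≤ y ∨ y ≤ x := by
    intro x hx y hy hxa hya
    by_contra hxy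
    exact hs x (mem_of_mem_erase hx) y (mem_of_mem_erase hy) a has (not_or.1 hxy)
      ⟨hxa, fun h => hxa (hmax (mem_of_mem_erase hx) h)⟩
      ⟨hya, fun h => hya (hmax (mem_of_mem_erase hy) h)⟩
  by_cases h : ∀ p ∈ D, ∀ q ∈ C, p ≤ a → ¬ q ≤ a → p ≤ q ∨ q ≤ p
  · refine exists_isChain_isChain_sdiff_of_erase has (union_comm C D ▸ hCD) hDc hCc
      fun p hp q hq hqa => ?_
    by_cases hpa : p ≤ a
    · exact h p hp q hq hpa hqa
    · exact hhigh p (sdiff_subset hp) q (hC hq) hpa hqa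
  push Not at h
  obtain ⟨l, hl, k, hk, hla, hka, hlk, -⟩ := h
  refine exists_isChain_isChain_sdiff_of_erase has hCD hCc hDc fun p hp q hq hqa => ?_
  by_cases hpa : p ≤ a
  · have hpk : p ≤ k := (hCc.total hp hk).resolve_right fun hkp => hka (hkp.trans hpa)
    have hlq : l ≤ q := (hDc.total hl hq).resolve_right fun hql => hqa (hql.trans hla)
    rcases hhigh k (hC hk) q (sdiff_subset hq) hka hqa with hkq | hqk
    · exact .inl (hpk.trans hkq)
    · exact absurd (hlq.trans hqk) hlk
  · exact hhigh p (hC hp) q (sdiff_subset hq) hpa hqa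

end WidthTwo

section Rank

variable {ι β : Type*} [LinearOrder β] (f : ι → β) {B S : Finset ι}

lemma mem_iff_card_filter_lt_lt_card (hSB : S ⊆ B)
    (hS : ∀ x ∈ S, ∀ y ∈ B, y ∉ S → f y < f x) {i : ι} (hi : i ∈ B) :
    i ∈ S ↔ #{x ∈ B | f i < f x} < #S := by
  classical
  constructor
  · intro hiS
    refine (card_le_card fun x hx => ?_).trans_lt (card_erase_lt_of_mem hiS)
    obtain ⟨hxB, hix⟩ := mem_filter.1 hx
    refine mem_erase.2 ⟨?_, ?_⟩
    · rintro rfl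
      exact lt_irrefl _ hix
    · by_contra hxS
      exact (hS i hiS x hxB hxS).not_gt hix
  · intro hlt
    by_contra hiS
    exact hlt.not_ge (card_le_card fun x hxS => mem_filter.2 ⟨hSB hxS, hS x hxS i hi hiS⟩)

lemma injOn_card_filter_lt (hf : Set.InjOn f B) :
    Set.InjOn (fun i => #{x ∈ B | f i < f x}) B := by
  have key : ∀ x ∈ B, ∀ y ∈ B, f x < f y → #{z ∈ B | f y < f z} < #{z ∈ B | f x < f z} :=
    fun x _ y hy hxy => card_lt_card <| (ssubset_iff_of_subset
      fun z hz => mem_filter.2 ⟨(mem_filter.1 hz).1, hxy.trans (mem_filter.1 hz).2⟩).2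
      ⟨y, mem_filter.2 ⟨hy, hxy⟩, fun h => lt_irrefl _ (mem_filter.1 h).2⟩
  intro x hx y hy hxy
  rcases lt_trichotomy (f x) (f y) with h | h | h
  · exact absurd hxy (key x hx y hy h).ne'
  · exact hf hx hy h
  · exact absurd hxy (key y hy x hx h).ne

end Rank

namespace F2Stability

section SetFamily

variable {α : Type*}

def RowLE (F : Finset (Finset α)) (x y : α) : Prop := ∀ S ∈ F, x ∈ S → y ∈ S

instance (F : Finset (Finset α)) : IsPreorder α (RowLE F) where
  refl _ _ _ h := h
  trans _ _ _ hxy hyz S hS hx := hyz S hS (hxy S hS hx)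

-- The membership pattern forces `a`, `u`, `v` to be distinct.
def HasF2 (F : Finset (Finset α)) : Prop :=
  ∃ a u v : α, ∃ S₁ ∈ F, ∃ S₂ ∈ F, ∃ S₃ ∈ F, ∃ S₄ ∈ F,
    (a ∈ S₁ ∧ u ∈ S₁ ∧ v ∉ S₁) ∧ (a ∈ S₂ ∧ u ∉ S₂ ∧ v ∈ S₂) ∧
    (a ∉ S₃ ∧ u ∈ S₃ ∧ v ∉ S₃) ∧ (a ∉ S₄ ∧ u ∉ S₄ ∧ v ∈ S₄)

def Enters (C : Finset (Finset α)) (u : α) : Prop := (∃ S ∈ C, u ∉ S) ∧ ∃ T ∈ C, u ∈ T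

def EntersBefore (C : Finset (Finset α)) (u v : α) : Prop :=
  ∃ P ∈ C, ∃ Q ∈ C, ∃ R ∈ C, (u ∉ P ∧ v ∉ P) ∧ (u ∈ Q ∧ v ∉ Q) ∧ (u ∈ R ∧ v ∈ R)

variable {C D : Finset (Finset α)} {u v : α}

lemma Enters.mono (h : Enters C u) (hCD : C ⊆ D) : Enters D u :=
  let ⟨⟨S, hS, huS⟩, ⟨T, hT, huT⟩⟩ := h
  ⟨⟨S, hCD hS, huS⟩, ⟨T, hCD hT, huT⟩⟩

lemma EntersBefore.mono (h : EntersBefore C u v) (hCD : C ⊆ D) : EntersBefore D u v :=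
  let ⟨P, hP, Q, hQ, R, hR, hPuv, hQuv, hRuv⟩ := h
  ⟨P, hCD hP, Q, hCD hQ, R, hCD hR, hPuv, hQuv, hRuv⟩

variable [DecidableEq α]

/-- Choosing one new element at each step of a chain `S₀ ⊂ S₁ ⊂ ⋯ ⊂ S_t` gives `t` elements,
any two of which enter the chain at different steps. -/
theorem exists_transversal_of_isChain (C : Finset (Finset α))
    (hC : IsChain (· ≤ ·) (C : Set (Finset α))) :
    ∃ J : Finset α, #J = #C - 1 ∧ (∀ u ∈ J, Enters C u) ∧
      ∀ u ∈ J, ∀ v ∈ J, u ≠ v → EntersBefore C u v ∨ EntersBefore C v u := by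
  induction C using Finset.strongInduction with
  | H C ih =>
  rcases C.eq_empty_or_nonempty with rfl | hne
  · exact ⟨∅, by simp⟩
  obtain ⟨S₀, hS₀, hS₀le⟩ := hC.exists_forall_le hne
  have hC' : IsChain (· ≤ ·) ((C.erase S₀ : Finset (Finset α)) : Set (Finset α)) :=
    hC.mono (by simp)
  obtain ⟨J, hJcard, hJ, hJsep⟩ := ih _ (erase_ssubset hS₀) hC'
  have hcard : #(C.erase S₀) = #C - 1 := card_erase_of_mem hS₀
  rcases (C.erase S₀).eq_empty_or_nonempty with hempty | hne'
  · exact ⟨∅, by simp_all, by simp, by simp⟩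
  obtain ⟨S₁, hS₁, hS₁le⟩ := hC'.exists_forall_le hne'
  obtain ⟨u, hu₁, hu₀⟩ := exists_of_ssubset
    ((hS₀le S₁ (mem_of_mem_erase hS₁)).lt_of_ne (ne_of_mem_erase hS₁).symm)
  have hJS₁ : ∀ v ∈ J, v ∉ S₁ := fun v hv hvS₁ =>
    let ⟨⟨S, hS, hvS⟩, _⟩ := hJ v hv
    hvS (hS₁le S hS hvS₁)
  have hbefore : ∀ v ∈ J, EntersBefore C u v := fun v hv =>
    let ⟨_, T, hT, hvT⟩ := hJ v hv
    ⟨S₀, hS₀, S₁, mem_of_mem_erase hS₁, T, mem_of_mem_erase hT,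
      ⟨hu₀, fun h => hJS₁ v hv (hS₀le S₁ (mem_of_mem_erase hS₁) h)⟩, ⟨hu₁, hJS₁ v hv⟩,
      ⟨hS₁le T hT hu₁, hvT⟩⟩
  have huJ : u ∉ J := fun h => hJS₁ u h hu₁
  refine ⟨insert u J, ?_, ?_, ?_⟩
  · rw [card_insert_of_notMem huJ, hJcard, hcard]
    have := hne'.card_pos
    omega
  · refine forall_mem_insert _ _ _ |>.2 ⟨⟨⟨S₀, hS₀, hu₀⟩, ⟨S₁, mem_of_mem_erase hS₁, hu₁⟩⟩,
      fun v hv => (hJ v hv).mono (erase_subset _ _)⟩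
  · intro v hv w hw hvw
    rcases mem_insert.1 hv with rfl | hvJ <;> rcases mem_insert.1 hw with rfl | hwJ
    · exact absurd rfl hvw
    · exact .inl (hbefore w hwJ)
    · exact .inr (hbefore v hvJ)
    · exact (hJsep v hvJ w hwJ hvw).imp (·.mono (erase_subset _ _)) (·.mono (erase_subset _ _))

variable {F : Finset (Finset α)} {a b x y : α}

def twins (F : Finset (Finset α)) (a : α) : Finset (Finset α) :=
  {S ∈ F | a ∉ S ∧ insert a S ∈ F}

lemma mem_twins {S : Finset α} : S ∈ twins F a ↔ S ∈ F ∧ a ∉ S ∧ insert a S ∈ F := mem_filter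

lemma ne_of_enters_twins (h : Enters (twins F a) u) : u ≠ a := by
  rintro rfl
  obtain ⟨_, T, hT, huT⟩ := h
  exact (mem_twins.1 hT).2.1 huT

lemma mem_of_enters_twins {V : Finset α} (hFV : ∀ S ∈ F, S ⊆ V) (h : Enters (twins F a) u) :
    u ∈ V :=
  let ⟨_, T, hT, huT⟩ := h
  hFV T (mem_twins.1 hT).1 huT

lemma notMem_insert_of_notMem {S T : Finset α} (hT : a ∉ T) (huT : u ∈ T) (huS : u ∉ S) :
    u ∉ insert a S := by
  rw [mem_insert]
  rintro (rfl | h)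
  exacts [hT huT, huS h]

theorem isChain_twins (hF : ¬ HasF2 F) (a : α) :
    IsChain (· ≤ ·) (twins F a : Set (Finset α)) := by
  intro S hS T hT _
  by_contra h
  obtain ⟨u, huS, huT⟩ := not_subset.1 (not_or.1 h).1
  obtain ⟨v, hvT, hvS⟩ := not_subset.1 (not_or.1 h).2
  obtain ⟨hSF, haS, hSa⟩ := mem_twins.1 hS
  obtain ⟨hTF, haT, hTa⟩ := mem_twins.1 hT
  exact hF ⟨a, u, v, insert a S, hSa, insert a T, hTa, S, hSF, T, hTF,
    ⟨mem_insert_self _ _, mem_insert_of_mem huS, notMem_insert_of_notMem haT hvT hvS⟩,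
    ⟨mem_insert_self _ _, notMem_insert_of_notMem haS huS huT, mem_insert_of_mem hvT⟩,
    ⟨haS, huS, hvS⟩, ⟨haT, huT, hvT⟩⟩

/-- A column containing `v` but not `u` would complete an `F₂` with columns of the twin chain, on
rows `v, a, u` or `u, a, v` according to whether it contains `a`. -/
theorem rowLE_of_entersBefore (hF : ¬ HasF2 F) (h : EntersBefore (twins F a) u v) :
    RowLE F v u := by
  obtain ⟨P, hP, Q, hQ, R, hR, ⟨huP, hvP⟩, ⟨huQ, hvQ⟩, ⟨huR, hvR⟩⟩ := h
  obtain ⟨hPF, haP, hPa⟩ := mem_twins.1 hP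
  obtain ⟨hQF, haQ, hQa⟩ := mem_twins.1 hQ
  obtain ⟨hRF, haR, -⟩ := mem_twins.1 hR
  intro Z hZ hvZ
  by_contra huZ
  by_cases haZ : a ∈ Z
  · exact hF ⟨v, a, u, Z, hZ, R, hRF, insert a P, hPa, Q, hQF, ⟨hvZ, haZ, huZ⟩, ⟨hvR, haR, huR⟩,
      ⟨notMem_insert_of_notMem haR hvR hvP, mem_insert_self _ _,
        notMem_insert_of_notMem haQ huQ huP⟩, ⟨hvQ, haQ, huQ⟩⟩
  · exact hF ⟨u, a, v, insert a Q, hQa, R, hRF, insert a P, hPa, Z, hZ,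
      ⟨mem_insert_of_mem huQ, mem_insert_self _ _, notMem_insert_of_notMem haR hvR hvQ⟩,
      ⟨huR, haR, hvR⟩,
      ⟨notMem_insert_of_notMem haQ huQ huP, mem_insert_self _ _,
        notMem_insert_of_notMem haR hvR hvP⟩, ⟨huZ, haZ, hvZ⟩⟩

theorem isChain_of_entersBefore (hF : ¬ HasF2 F) {J : Finset α}
    (hJ : ∀ u ∈ J, ∀ v ∈ J, u ≠ v → EntersBefore (twins F a) u v ∨ EntersBefore (twins F a) v u) :
    IsChain (RowLE F) (J : Set α) := fun u hu v hv huv =>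
  (hJ u hu v hv huv).symm.imp (rowLE_of_entersBefore hF) (rowLE_of_entersBefore hF)

theorem not_enters_twins_of_entersBefore (hF : ¬ HasF2 F)
    (h : EntersBefore (twins F a) b u ∨ EntersBefore (twins F a) u b) :
    ¬ Enters (twins F b) u := by
  intro hu
  have hub := ne_of_enters_twins hu
  obtain ⟨⟨S, hS, huS⟩, T, hT, huT⟩ := hu
  rcases h with h | h
  · exact (mem_twins.1 hT).2.1 (rowLE_of_entersBefore hF h T (mem_twins.1 hT).1 huT)
  · have := rowLE_of_entersBefore hF h _ (mem_twins.1 hS).2.2 (mem_insert_self _ _)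
    exact (mem_insert.1 this).elim hub huS

/-- Deleting row `a` merges exactly the pairs of twin columns at `a`. -/
theorem card_image_erase_add_card_twins (F : Finset (Finset α)) (a : α) :
    #(F.image (·.erase a)) + #(twins F a) = #F := by
  set F₁ := {S ∈ F | a ∈ S}
  set F₀ := {S ∈ F | a ∉ S}
  have hout : F₀.image (·.erase a) = F₀ :=
    (image_congr fun S hS => erase_eq_of_notMem (mem_filter.1 hS).2).trans image_id'
  have hin : #(F₁.image (·.erase a)) = #F₁ :=
    card_image_of_injOn fun S hS T hT h => by
      rw [← insert_erase (mem_filter.1 hS).2, ← insert_erase (mem_filter.1 hT).2]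
      exact congrArg (insert a) h
  have htwins : twins F a = F₁.image (·.erase a) ∩ F₀ := by
    ext T
    simp only [mem_twins, mem_inter, mem_image, mem_filter, F₁, F₀]
    constructor
    · rintro ⟨hT, haT, hTa⟩
      exact ⟨⟨insert a T, ⟨hTa, mem_insert_self _ _⟩, erase_insert haT⟩, hT, haT⟩
    · rintro ⟨⟨S, ⟨hS, haS⟩, rfl⟩, hT, -⟩
      exact ⟨hT, notMem_erase _ _, by rwa [insert_erase haS]⟩
  have himage : F.image (·.erase a) = F₁.image (·.erase a) ∪ F₀ := by
    conv_lhs => rw [← filter_union_filter_not_eq (a ∈ ·) F]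
    rw [image_union, hout]
  rw [himage, htwins, card_union_add_card_inter, hin, card_filter_add_card_filter_not]

theorem hasF2_of_image_erase (h : HasF2 (F.image (·.erase a))) : HasF2 F := by
  obtain ⟨b, u, v, S₁, hS₁, S₂, hS₂, S₃, hS₃, S₄, hS₄, h₁, h₂, h₃, h₄⟩ := h
  obtain ⟨T₁, hT₁, rfl⟩ := mem_image.1 hS₁
  obtain ⟨T₂, hT₂, rfl⟩ := mem_image.1 hS₂
  obtain ⟨T₃, hT₃, rfl⟩ := mem_image.1 hS₃
  obtain ⟨T₄, hT₄, rfl⟩ := mem_image.1 hS₄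
  have hb : b ≠ a := (mem_erase.1 h₁.1).1
  have hu : u ≠ a := (mem_erase.1 h₁.2.1).1
  have hv : v ≠ a := (mem_erase.1 h₂.2.2).1
  simp only [mem_erase, ne_eq, hb, hu, hv, not_false_eq_true, true_and] at h₁ h₂ h₃ h₄
  exact ⟨b, u, v, T₁, hT₁, T₂, hT₂, T₃, hT₃, T₄, hT₄, h₁, h₂, h₃, h₄⟩

theorem rowLE_of_rowLE_image_erase (hx : x ≠ a) (h : RowLE (F.image (·.erase a)) x y) :
    RowLE F x y := fun _ hS hxS =>
  (mem_erase.1 (h _ (mem_image_of_mem _ hS) (mem_erase.2 ⟨hx, hxS⟩))).2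

lemma hasF2_of_forall_separating_mem {V : Finset α} (ha : a ∈ V) (hu : u ∈ V) (hv : v ∈ V)
    (hau : a ≠ u) (hav : a ≠ v) (huv : u ≠ v) (h : ∀ U ⊆ V, (u ∈ U ↔ v ∉ U) → U ∈ F) :
    HasF2 F := by
  refine ⟨a, u, v, {a, u}, h _ ?_ ?_, {a, v}, h _ ?_ ?_, {u}, h _ ?_ ?_, {v}, h _ ?_ ?_, ?_⟩ <;>
    simp [insert_subset_iff, ha, hu, hv, hau, hav, huv, hau.symm, hav.symm, huv.symm]

theorem card_le_six_of_card_eq_three {V : Finset α} (hFV : ∀ S ∈ F, S ⊆ V) (hV : #V = 3)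
    (hF : ¬ HasF2 F) : #F ≤ 6 := by
  by_contra! hF7
  have hFP : F ⊆ V.powerset := fun S hS => mem_powerset.2 (hFV S hS)
  obtain ⟨W, hW⟩ : ∃ W, V.powerset \ F ⊆ {W} := by
    refine card_le_one_iff_subset_singleton.1 ?_
    rw [card_sdiff_of_subset hFP, card_powerset, hV]
    omega
  have hmem : ∀ U ⊆ V, U ≠ W → U ∈ F := fun U hU hUW => by
    by_contra hUF
    exact hUW (mem_singleton.1 (hW (mem_sdiff.2 ⟨mem_powerset.2 hU, hUF⟩)))
  -- Of three rows, two lie on the same side of the one missing set `W`.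
  have key : ∀ a u v, a ∈ V → u ∈ V → v ∈ V → a ≠ u → a ≠ v → u ≠ v → (u ∈ W ↔ v ∈ W) →
      False := fun a u v ha hu hv hau hav huv huvW =>
    hF (hasF2_of_forall_separating_mem ha hu hv hau hav huv fun U hU hsep =>
      hmem U hU (by rintro rfl; tauto))
  obtain ⟨x, y, z, hxy, hxz, hyz, rfl⟩ := card_eq_three.1 hV
  by_cases hxyW : x ∈ W ↔ y ∈ W
  · exact key z x y (by simp) (by simp) (by simp) hxz.symm hyz.symm hxy hxyW
  by_cases hxzW : x ∈ W ↔ z ∈ W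
  · exact key y x z (by simp) (by simp) (by simp) hxy.symm hyz hxz hxzW
  exact key x y z (by simp) (by simp) (by simp) hxy hxz hyz (by tauto)

/-- If every row outside `T` had more than `(#V + 1) / 2` twin pairs, pick `a ∉ T` and `b ∉ T` in a
transversal `Jₐ` of the twins of `a`: `Jₐ` and `J_b` are disjoint chains with at least `#V / 2`
elements each, so they cover `V ⊇ T`, yet each meets the antichain `T` at most once. -/
theorem exists_mem_sdiff_card_twins_le {V T : Finset α} (hFV : ∀ S ∈ F, S ⊆ V)
    (hF : ¬ HasF2 F) (hTV : T ⊆ V) (hT : IsAntichain (RowLE F) (T : Set α)) (hT3 : #T = 3)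
    (hV : 4 ≤ #V) : ∃ a ∈ V \ T, #(twins F a) ≤ (#V + 1) / 2 := by
  by_contra! hrich
  obtain ⟨a, ha⟩ : (V \ T).Nonempty := by
    rw [← card_pos, card_sdiff_of_subset hTV]
    omega
  obtain ⟨Ja, hJa, hJaE, hJaB⟩ := exists_transversal_of_isChain _ (isChain_twins hF a)
  have hJaV : Ja ⊆ V := fun u hu => mem_of_enters_twins hFV (hJaE u hu)
  have hTJa := card_inter_le_one_of_isAntichain_of_isChain hT (isChain_of_entersBefore hF hJaB)
  have hta := hrich a ha
  obtain ⟨b, hb⟩ : (Ja \ T).Nonempty := by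
    have := card_sdiff_add_card_inter Ja T
    rw [inter_comm] at this
    rw [← card_pos]
    omega
  obtain ⟨hbJa, hbT⟩ := mem_sdiff.1 hb
  obtain ⟨Jb, hJb, hJbE, hJbB⟩ := exists_transversal_of_isChain _ (isChain_twins hF b)
  have hJbV : Jb ⊆ V := fun u hu => mem_of_enters_twins hFV (hJbE u hu)
  have hTJb := card_inter_le_one_of_isAntichain_of_isChain hT (isChain_of_entersBefore hF hJbB)
  have htb := hrich b (mem_sdiff.2 ⟨hJaV hbJa, hbT⟩)
  have hdisj : Disjoint Ja Jb := disjoint_left.2 fun u hua hub => by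
    obtain rfl | hbu := eq_or_ne b u
    · exact ne_of_enters_twins (hJbE _ hub) rfl
    · exact not_enters_twins_of_entersBefore hF (hJaB b hbJa u hua hbu) (hJbE u hub)
  have hcover : V ⊆ Ja ∪ Jb := (eq_of_subset_of_card_le (union_subset hJaV hJbV)
    (by rw [card_union_of_disjoint hdisj]; omega)).superset
  have : #T ≤ 2 := calc
    #T = #(T ∩ Ja ∪ T ∩ Jb) := by
      rw [← inter_union_distrib_left, inter_eq_left.2 (hTV.trans hcover)]
    _ ≤ #(T ∩ Ja) + #(T ∩ Jb) := card_union_le _ _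
    _ ≤ 2 := by omega
  omega

lemma sq_div_four_add_succ_div_two (M : ℕ) : M ^ 2 / 4 + (M + 1) / 2 = (M + 1) ^ 2 / 4 := by
  obtain ⟨q, rfl | rfl⟩ := Nat.even_or_odd' M
  · ring_nf; omega
  · ring_nf; omega

/-- Deleting the row given by `exists_mem_sdiff_card_twins_le` loses at most `(#V + 1) / 2`
members and keeps the family `F₂`-free and `T` an antichain; then induct on `#V`, using
`#V ^ 2 / 4 + (#V + 1) / 2 = (#V + 1) ^ 2 / 4`. -/
theorem card_le_of_isAntichain {V T : Finset α} (hFV : ∀ S ∈ F, S ⊆ V) (hF : ¬ HasF2 F)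
    (hTV : T ⊆ V) (hT : IsAntichain (RowLE F) (T : Set α)) (hT3 : #T = 3) :
    #F ≤ (#V + 1) ^ 2 / 4 + 2 := by
  obtain ⟨N, hN⟩ : ∃ N, #V = N := ⟨_, rfl⟩
  induction N generalizing V F with
  | zero => have := card_le_card hTV; omega
  | succ N ih =>
    by_cases hV : #V ≤ 3
    · have hV3 : #V = 3 := le_antisymm hV (hT3 ▸ card_le_card hTV)
      rw [hV3]
      exact card_le_six_of_card_eq_three hFV hV3 hF
    obtain ⟨a, ha, hta⟩ := exists_mem_sdiff_card_twins_le hFV hF hTV hT hT3 (by omega)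
    obtain ⟨haV, haT⟩ := mem_sdiff.1 ha
    have hT' : IsAntichain (RowLE (F.image (·.erase a))) (T : Set α) := fun x hx y hy hxy h =>
      hT hx hy hxy (rowLE_of_rowLE_image_erase (by rintro rfl; exact haT hx) h)
    have hdel := ih (V := V.erase a) (F := F.image (·.erase a))
      (by simpa using fun S hS => erase_subset_erase a (hFV S hS))
      (fun h => hF (hasF2_of_image_erase h)) (subset_erase.2 ⟨hTV, haT⟩) hT'
      (by rw [card_erase_of_mem haV]; omega)
    rw [card_erase_of_mem haV, hN, Nat.add_sub_cancel] at hdel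
    rw [hN] at hta ⊢
    have := card_image_erase_add_card_twins F a
    have := sq_div_four_add_succ_div_two (N + 1)
    omega

end SetFamily

section Matrix

variable {ι κ : Type*} [Fintype κ]

/-- Rank the rows of the chain by decreasing number of ones, breaking ties by index. -/
lemma exists_rank_of_isChain [LinearOrder ι] {A : ι → κ → Bool} {B : Finset ι}
    (hB : ∀ x ∈ B, ∀ y ∈ B, A x ≤ A y ∨ A y ≤ A x) :
    ∃ g : ι → ℕ, Set.InjOn g B ∧
      ∀ i ∈ B, g i < #B ∧ ∀ j, A i j = decide (g i < #{x ∈ B | A x j}) := by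
  let f : ι → ℕ ×ₗ ι := fun x => toLex (#{j | A x j}, x)
  have hf : Set.InjOn f B := fun x _ y _ h => congrArg Prod.snd (toLex.injective h)
  refine ⟨fun i => #{x ∈ B | f i < f x}, injOn_card_filter_lt f hf, fun i hi => ⟨?_, fun j => ?_⟩⟩
  · exact (mem_iff_card_filter_lt_lt_card f subset_rfl (fun _ _ _ hy hyB => absurd hy hyB) hi).1 hi
  · have hS : ∀ x ∈ {x ∈ B | A x j}, ∀ y ∈ B, y ∉ {x ∈ B | A x j} → f y < f x := by
      intro x hx y hy hyS
      obtain ⟨hxB, hxj⟩ := mem_filter.1 hx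
      have hyj : A y j = false := by simpa [hy] using hyS
      have hyx : A y ≤ A x :=
        (hB x hxB y hy).resolve_left fun h => absurd (h j) (by simp [hxj, hyj])
      refine Prod.Lex.toLex_lt_toLex.2 (.inl (card_lt_card ⟨fun k hk => ?_, fun h => ?_⟩))
      · simpa using (Bool.le_iff_imp.1 (hyx k)) (by simpa using hk)
      · exact Bool.false_ne_true (hyj ▸ (mem_filter.1 (h (mem_filter.2 ⟨mem_univ _, hxj⟩))).2)
    rw [Bool.eq_iff_iff, decide_eq_true_iff,
      ← mem_iff_card_filter_lt_lt_card f (filter_subset _ _) hS hi]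
    simp [hi]

theorem isConfig_triProd {m : ℕ} {A : Fin m → κ → Bool} (hA : Simple A) (K : Finset (Fin m))
    (hK : ∀ x ∈ K, ∀ y ∈ K, A x ≤ A y ∨ A y ≤ A x)
    (hKc : ∀ x ∉ K, ∀ y ∉ K, A x ≤ A y ∨ A y ≤ A x) :
    IsConfig A (triProd #K (m - #K)) := by
  obtain ⟨g, hg_inj, hg⟩ := exists_rank_of_isChain hK
  obtain ⟨h, hh_inj, hh⟩ := exists_rank_of_isChain (B := Kᶜ) (by simpa using hKc)
  have hcard : #Kᶜ = m - #K := by rw [card_compl, Fintype.card_fin]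
  let r : Fin m → Fin #K ⊕ Fin (m - #K) := fun i =>
    if hi : i ∈ K then .inl ⟨g i, (hg i hi).1⟩ else .inr ⟨h i, hcard ▸ (hh i (mem_compl.2 hi)).1⟩
  let c : κ → Fin (#K + 1) × Fin (m - #K + 1) := fun j =>
    (⟨#{x ∈ K | A x j}, Nat.lt_succ_of_le (card_filter_le _ _)⟩,
      ⟨#{x ∈ Kᶜ | A x j}, Nat.lt_succ_of_le (hcard ▸ card_filter_le _ _)⟩)
  refine .of_simple (c := c) hA (r := r) ?_ fun i j => ?_
  · intro i i' hii'
    by_cases hi : i ∈ K <;> by_cases hi' : i' ∈ K <;> simp [r, hi, hi'] at hii'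
    · exact hg_inj hi hi' hii'
    · exact hh_inj (mem_compl.2 hi) (mem_compl.2 hi') hii'
  · by_cases hi : i ∈ K
    · rw [(hg i hi).2 j]
      simp [r, c, hi, triProd]
    · rw [(hh i (mem_compl.2 hi)).2 j]
      simp [r, c, hi, triProd]

variable [Fintype ι] [DecidableEq ι] {A : ι → κ → Bool}

def colSupports (A : ι → κ → Bool) : Finset (Finset ι) :=
  univ.image fun j => ({i | A i j} : Finset ι)

lemma card_colSupports (hA : Simple A) : #(colSupports A) = Fintype.card κ := by
  rw [colSupports, card_image_of_injective, card_univ]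
  intro j j' h
  exact hA (funext fun i => Bool.eq_iff_iff.2 (by simpa using congrArg (i ∈ ·) h))

lemma rowLE_colSupports_iff {x y : ι} : RowLE (colSupports A) x y ↔ A x ≤ A y := by
  simp [RowLE, colSupports, Pi.le_def, Bool.le_iff_imp]

lemma incompRel_rowLE_colSupports_iff {x y : ι} :
    IncompRel (RowLE (colSupports A)) x y ↔ IncompRel (· ≤ ·) (A x) (A y) := by
  simp only [IncompRel, rowLE_colSupports_iff]

theorem isConfig_F2_of_hasF2 (h : HasF2 (colSupports A)) : IsConfig F2 A := by
  obtain ⟨a, u, v, S₁, hS₁, S₂, hS₂, S₃, hS₃, S₄, hS₄, h₁, h₂, h₃, h₄⟩ := h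
  obtain ⟨j₁, -, rfl⟩ := mem_image.1 hS₁
  obtain ⟨j₂, -, rfl⟩ := mem_image.1 hS₂
  obtain ⟨j₃, -, rfl⟩ := mem_image.1 hS₃
  obtain ⟨j₄, -, rfl⟩ := mem_image.1 hS₄
  simp only [mem_filter, mem_univ, true_and, Bool.not_eq_true] at h₁ h₂ h₃ h₄
  have hentry : ∀ i j, F2 i j = A (![a, u, v] i) (![j₁, j₂, j₃, j₄] j) := by
    intro i j
    fin_cases i <;> fin_cases j <;> simp [F2, h₁, h₂, h₃, h₄]
  exact .of_simple (by unfold Simple; decide)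
    (injective_of_injective_of_forall_eq (by decide) hentry) hentry

theorem card_le_of_incompRel (hA : Simple A) (hF2 : ¬ IsConfig F2 A) {x y z : ι}
    (hxy : IncompRel (· ≤ ·) (A x) (A y)) (hxz : IncompRel (· ≤ ·) (A x) (A z))
    (hyz : IncompRel (· ≤ ·) (A y) (A z)) :
    3 ≤ Fintype.card ι ∧ Fintype.card κ ≤ (Fintype.card ι + 1) ^ 2 / 4 + 2 := by
  have hT3 : #{x, y, z} = 3 := card_eq_three.2
    ⟨x, y, z, ne_of_apply_ne A hxy.ne, ne_of_apply_ne A hxz.ne, ne_of_apply_ne A hyz.ne, rfl⟩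
  rw [← incompRel_rowLE_colSupports_iff] at hxy hxz hyz
  refine ⟨hT3 ▸ card_le_univ _, ?_⟩
  rw [← card_colSupports hA, ← card_univ]
  exact card_le_of_isAntichain (fun S _ => subset_univ S)
    (fun h => hF2 (isConfig_F2_of_hasF2 h)) (subset_univ _)
    (by push_cast; exact isAntichain_of_incompRel hxy hxz hyz) hT3

end Matrix

lemma sq_le_four_mul_sq_div_four_add_one (m : ℕ) : m ^ 2 ≤ 4 * (m ^ 2 / 4) + 1 := by
  obtain ⟨q, rfl | rfl⟩ := Nat.even_or_odd' m <;> ring_nf <;> omega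

lemma sq_sub_one_div_four_le (m : ℕ) : ((m : ℝ) ^ 2 - 1) / 4 ≤ ((m ^ 2 / 4 : ℕ) : ℝ) := by
  have := sq_le_four_mul_sq_div_four_add_one m
  have : ((m ^ 2 : ℕ) : ℝ) ≤ ((4 * (m ^ 2 / 4) + 1 : ℕ) : ℝ) := by exact_mod_cast this
  push_cast at this
  linarith

lemma succ_sq_div_four_add_two_lt {m n : ℕ} (hm : 3 ≤ m)
    (hn : ((m ^ 2 / 4 + m + 1 : ℕ) : ℝ) - (m : ℝ) / 6 + 1 ≤ (n : ℝ)) :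
    (m + 1) ^ 2 / 4 + 2 < n := by
  have h₁ : ((((m + 1) ^ 2 / 4 : ℕ) * 4 : ℕ) : ℝ) ≤ (((m + 1) ^ 2 : ℕ) : ℝ) := by
    exact_mod_cast Nat.div_mul_le_self _ 4
  have h₂ := sq_sub_one_div_four_le m
  have h₃ : (3 : ℝ) ≤ m := by exact_mod_cast hm
  push_cast at h₁ hn
  have : (((m + 1) ^ 2 / 4 + 2 : ℕ) : ℝ) < n := by push_cast; nlinarith
  exact_mod_cast this

lemma half_sub_sqrt_le_of_le_mul {m n k : ℕ} (hk : k ≤ m)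
    (hn : ((m ^ 2 / 4 + m + 1 : ℕ) : ℝ) - (m : ℝ) / 6 + 1 ≤ (n : ℝ))
    (hcard : n ≤ (k + 1) * (m - k + 1)) :
    (m : ℝ) / 2 - Real.sqrt ((m : ℝ) / 6) ≤ (k : ℝ) ∧
      (m : ℝ) / 2 - Real.sqrt ((m : ℝ) / 6) ≤ ((m - k : ℕ) : ℝ) := by
  have h₁ : (n : ℝ) ≤ ((k : ℝ) + 1) * ((m : ℝ) - k + 1) := by
    rw [← Nat.cast_sub hk]; exact_mod_cast hcard
  have h₂ := sq_sub_one_div_four_le m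
  push_cast at hn
  have hsq : ((k : ℝ) - m / 2) ^ 2 ≤ m / 6 := by nlinarith
  have := abs_le.1 (Real.abs_le_sqrt hsq)
  rw [Nat.cast_sub hk]
  constructor <;> linarith

end F2Stability

open F2Stability in
/-- Stability for `F₂`: if a simple `m`-rowed matrix `A` avoiding `F₂` has at least
`⌊m²/4⌋ + m + 1 − m/6 + 1` columns, then `A` is a configuration in
`[0_k T_k] × [0_{m−k} T_{m−k}]` where both `k` and `m−k` are at least `m/2 − √(m/6)`. -/
theorem stmt7 (m n : ℕ) (A : Fin m → Fin n → Bool) (hS : Simple A)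
    (hav : ¬ IsConfig F2 A)
    (hn : ((m ^ 2 / 4 + m + 1 : ℕ) : ℝ) - (m : ℝ) / 6 + 1 ≤ (n : ℝ)) :
    ∃ k ≤ m, IsConfig A (triProd k (m - k)) ∧
      (m : ℝ) / 2 - Real.sqrt ((m : ℝ) / 6) ≤ (k : ℝ) ∧
      (m : ℝ) / 2 - Real.sqrt ((m : ℝ) / 6) ≤ ((m - k : ℕ) : ℝ) := by
  have hwidth : ∀ p ∈ univ.image A, ∀ q ∈ univ.image A, ∀ r ∈ univ.image A,
      IncompRel (· ≤ ·) p q → IncompRel (· ≤ ·) p r → IncompRel (· ≤ ·) q r → False := by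
    simp only [mem_image, mem_univ, true_and, forall_exists_index, forall_apply_eq_imp_iff]
    intro x y z hxy hxz hyz
    obtain ⟨hm, hcard⟩ := card_le_of_incompRel hS hav hxy hxz hyz
    simp only [Fintype.card_fin] at hm hcard
    exact (succ_sq_div_four_add_two_lt hm hn).not_ge hcard
  obtain ⟨C, -, hC, hD⟩ := exists_isChain_isChain_sdiff _ hwidth
  set K : Finset (Fin m) := {i | A i ∈ C}
  have hconf := isConfig_triProd hS K
    (fun x hx y hy => hC.total (mem_filter.1 hx).2 (mem_filter.1 hy).2)
    (fun x hx y hy => hD.total (by simpa [K] using hx) (by simpa [K] using hy))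
  have hk : #K ≤ m := (card_le_univ K).trans_eq (Fintype.card_fin m)
  have hcard := hconf.card_le
  simp only [Fintype.card_fin, Fintype.card_prod] at hcard
  exact ⟨#K, hk, hconf, half_sub_sqrt_le_of_le_mul hk hn hcard⟩
end

section
/- A procedure graph (the directed graph whose edges record, for a simple matrix A avoiding F(1,2,2,1), the unique [0;1]-column-occurrence on a pair of rows removed at each step) contains no directed cycle. -/
/-- `F(1,2,2,1)`: the 2×6 configuration with columns (0,0),(1,0),(1,0),(0,1),(0,1),(1,1). -/
def F1221 : Fin 2 → Fin 6 → Bool :=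
  ![![false, true, true, false, false, true], ![false, false, false, true, true, true]]

/-- `L` records a run of the procedure building the procedure graph of `A`:
each step is a triple `(j, k, α)` of two rows and the removed column; the removed
columns are pairwise distinct; exactly `n - (m+1)` steps are performed, so that at most
`m+1` columns remain; and at each step, among the columns not yet removed, the rows
`j, k` carry all four (0,1)-patterns (a `K₂`), the column `α` has entry 0 in row `j`
and 1 in row `k`, and `α` is the unique remaining column with this `[0;1]` pattern on
rows `j, k`.  The directed edges of the procedure graph are the pairs `(j, k)`. -/
def IsProcedureList {m n : ℕ} (A : Fin m → Fin n → Bool)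
    (L : List (Fin m × Fin m × Fin n)) : Prop :=
  (L.map fun s => s.2.2).Nodup ∧
  L.length = n - (m + 1) ∧
  ∀ (t : ℕ) (ht : t < L.length),
    let s := L.get ⟨t, ht⟩
    let R : Finset (Fin n) :=
      Finset.univ.filter fun c => c ∉ (L.take t).map fun s' => s'.2.2
    (∀ p : Bool × Bool, ∃ c ∈ R, A s.1 c = p.1 ∧ A s.2.1 c = p.2) ∧
    A s.1 s.2.2 = false ∧ A s.2.1 s.2.2 = true ∧
    ∀ c ∈ R, A s.1 c = false → A s.2.1 c = true → c = s.2.2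

/-- The directed edge set of the procedure recorded by `L`. -/
def procEdges {m n : ℕ} (L : List (Fin m × Fin m × Fin n)) : List (Fin m × Fin m) :=
  L.map fun s => (s.1, s.2.1)

def removedBefore {α β : Type*} (L : List (α × α × β)) (t : ℕ) : List β :=
  (L.take t).map fun s => s.2.2

lemma removedBefore_subset {α β : Type*} (L : List (α × α × β)) {t t' : ℕ} (h : t ≤ t') :
    removedBefore L t ⊆ removedBefore L t' :=
  List.map_subset _ (List.take_subset_take_left L h)

lemma get_mem_removedBefore {α β : Type*} {L : List (α × α × β)} {t : Fin L.length}
    {t' : ℕ} (h : t < t') : (L.get t).2.2 ∈ removedBefore L t' :=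
  List.mem_map_of_mem (List.mem_take_iff_getElem.2 ⟨t, by omega, rfl⟩)

lemma mem_procEdges_iff {m n : ℕ} {L : List (Fin m × Fin m × Fin n)} {e : Fin m × Fin m} :
    e ∈ procEdges L ↔ ∃ t : Fin L.length, ((L.get t).1, (L.get t).2.1) = e := by
  rw [procEdges, List.mem_map]
  constructor
  · rintro ⟨a, ha, rfl⟩
    obtain ⟨t, rfl⟩ := List.mem_iff_get.1 ha
    exact ⟨t, rfl⟩
  · rintro ⟨t, rfl⟩
    exact ⟨_, L.get_mem t, rfl⟩

lemma closedWalk_propagate {α : Type*} (P : α → Prop) {v : ℕ → α} {p : ℕ}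
    (hvp : v p = v 0) (hstep : ∀ i < p, P (v i) → P (v (i + 1)))
    {j k : ℕ} (hj : j ≤ p) (hk : k ≤ p) (h : P (v j)) : P (v k) := by
  have forward : ∀ i, P (v i) → ∀ l, i ≤ l → l ≤ p → P (v l) := fun i hi l hil =>
    Nat.le_induction (fun _ => hi)
      (fun l _ ih hl => hstep l hl (ih (Nat.le_of_succ_le hl))) l hil
  exact forward 0 (hvp ▸ forward j h p hj le_rfl) k k.zero_le hk

namespace IsProcedureList

variable {m n : ℕ} {A : Fin m → Fin n → Bool} {L : List (Fin m × Fin m × Fin n)}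

lemma exists_remaining_true_false (hL : IsProcedureList A L) (t : Fin L.length) :
    ∃ c ∉ removedBefore L t, A (L.get t).1 c = true ∧ A (L.get t).2.1 c = false := by
  obtain ⟨c, hc, h⟩ := (hL.2.2 t t.2).1 (true, false)
  exact ⟨c, by simpa [removedBefore] using hc, h⟩

lemma target_eq_false_of_source_eq_false (hL : IsProcedureList A L) {t t' : Fin L.length}
    (htt' : t < t') {c : Fin n} (hc : c ∉ removedBefore L t') (h : A (L.get t).1 c = false) :
    A (L.get t).2.1 c = false := by
  obtain ⟨-, -, -, hunique⟩ := hL.2.2 t t.2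
  have hcR : c ∉ removedBefore L t := fun hmem => hc (removedBefore_subset L htt'.le hmem)
  by_contra hne
  have hct : c = (L.get t).2.2 :=
    hunique c (by simpa [removedBefore] using hcR) h (Bool.not_eq_false _ ▸ hne)
  exact hc (hct ▸ get_mem_removedBefore htt')

end IsProcedureList

theorem stmt9_general (m n : ℕ) (A : Fin m → Fin n → Bool)
    (L : List (Fin m × Fin m × Fin n)) (hL : IsProcedureList A L) :
    ¬ ∃ (p : ℕ) (v : ℕ → Fin m), 1 ≤ p ∧ v p = v 0 ∧
        ∀ i < p, (v i, v (i + 1)) ∈ procEdges L := by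
  rintro ⟨p, v, hp, hvp, hcyc⟩
  choose t ht using fun i : Fin p => mem_procEdges_iff.1 (hcyc i i.2)
  simp only [Prod.ext_iff] at ht
  have : Nonempty (Fin p) := ⟨⟨0, hp⟩⟩
  obtain ⟨s, hs⟩ := Finite.exists_max t
  obtain ⟨c, hc, hjc, hkc⟩ := hL.exists_remaining_true_false (t s)
  rw [(ht s).1] at hjc
  rw [(ht s).2] at hkc
  have hstep : ∀ i < p, A (v i) c = false → A (v (i + 1)) c = false := by
    intro i hi h
    rw [← (ht ⟨i, hi⟩).2]
    rcases (hs ⟨i, hi⟩).lt_or_eq with hlt | heq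
    · exact hL.target_eq_false_of_source_eq_false hlt hc ((ht ⟨i, hi⟩).1 ▸ h)
    · rwa [heq, (ht s).2]
  have := closedWalk_propagate (A · c = false) hvp hstep s.2 s.2.le hkc
  simp [hjc] at this

/-- A procedure graph of a simple matrix avoiding `F(1,2,2,1)` contains no directed
cycle. -/
theorem stmt9 (m n : ℕ) (A : Fin m → Fin n → Bool) (hS : Simple A)
    (hav : ¬ IsConfig F1221 A) (hn : m + 1 < n)
    (L : List (Fin m × Fin m × Fin n)) (hL : IsProcedureList A L) :
    ¬ ∃ (p : ℕ) (v : ℕ → Fin m), 1 ≤ p ∧ v p = v 0 ∧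
        ∀ i < p, (v i, v (i + 1)) ∈ procEdges L :=
  stmt9_general m n A L hL
end
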